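/- arXiv:2302.10496 — 8 statements merged into one kernel-verified Lean document; each statement's English description precedes it below -/
import Mathlib

section
/- For every finite simple graph G = (V, E) and every positive integer d, the number of parity-closed walks of length d in G satisfies 2^{|E|} · P_d = Σ_{π} trace((A_π)^d), where the sum runs over all 2^{|E|} sign functions π on G. Equivalently, P_d is the arithmetic mean of the d-th spectral moments of all signed graphs with underlying graph G. -/
open Matrix SimpleGraph

/-- The signed adjacency matrix of a graph `G` with sign function `π` on its edge set. -/
noncomputable def signedAdj {V : Type*} [Fintype V] [DecidableEq V] (G : SimpleGraph V)
    [DecidableRel G.Adj] (π : G.edgeSet → ℤˣ) : Matrix V V ℝ :=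
  Matrix.of fun u v =>
    if h : G.Adj u v then ((π ⟨s(u, v), (G.mem_edgeSet).mpr h⟩ : ℤ) : ℝ) else 0

/-- The number of parity-closed walks of length `d` in `G`: closed walks (with a distinguished
starting vertex) of length `d` that traverse each edge of `G` an even number of times. -/
noncomputable def parityClosedWalkCount {V : Type*} [Fintype V] [DecidableEq V]
    (G : SimpleGraph V) (d : ℕ) : ℕ :=
  ∑ v : V, Nat.card {p : G.Walk v v // p.length = d ∧
      ∀ e ∈ G.edgeSet, Even (p.edges.count e)}

/-!
Expanding `(A_π ^ d) v v` over the closed walks `p` of length `d` at `v`, the walk `p` contributes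
`∏ₑ π(e) ^ cₑ(p)`, where `cₑ(p)` is the number of traversals of `e`. Summed over all `π` this
product factors over the edges, and `∑_{s = ±1} s ^ c` is `2` for even `c` and `0` for odd `c`.
Hence `p` contributes `2 ^ |E|` in total if it is parity-closed and `0` otherwise.
-/

open Finset

lemma sum_intUnits_pow {R : Type*} [Ring R] (m : ℕ) :
    ∑ s : ℤˣ, ((s : ℤ) : R) ^ m = if Even m then 2 else 0 := by
  rw [show (univ : Finset ℤˣ) = {1, -1} by decide, sum_pair (by decide)]
  rcases Nat.even_or_odd m with hm | hm
  · simp [hm, hm.neg_one_pow, one_add_one_eq_two]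
  · simp [hm.neg_one_pow, Nat.not_even_iff_odd.mpr hm]

lemma sum_pi_intUnits_prod_pow {ι R : Type*} [Fintype ι] [DecidableEq ι] [CommRing R]
    (k : ι → ℕ) :
    ∑ π : ι → ℤˣ, ∏ i, ((π i : ℤ) : R) ^ k i =
      if ∀ i, Even (k i) then 2 ^ Fintype.card ι else 0 := by
  rw [← Fintype.prod_sum fun i (s : ℤˣ) => ((s : ℤ) : R) ^ k i,
    prod_congr rfl fun i _ => sum_intUnits_pow (k i), Fintype.prod_ite_zero, prod_const,
    card_univ]

namespace SimpleGraph

variable {V : Type*} {G : SimpleGraph V}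

def Walk.weight {R : Type*} [Monoid R] (M : Matrix V V R) {u v : V} (p : G.Walk u v) : R :=
  (p.darts.map fun d => M d.fst d.snd).prod

@[simp]
lemma Walk.weight_nil {R : Type*} [Monoid R] (M : Matrix V V R) {u : V} :
    (Walk.nil : G.Walk u u).weight M = 1 := rfl

lemma matrix_pow_apply_eq_sum_walk_weight [Fintype V] [DecidableEq V] [DecidableRel G.Adj]
    {R : Type*} [Semiring R] {M : Matrix V V R} (hM : ∀ u v, ¬G.Adj u v → M u v = 0)
    (n : ℕ) (u v : V) :
    (M ^ n) u v = ∑ p ∈ G.finsetWalkLength n u v, p.weight M := by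
  induction n generalizing u with
  | zero => obtain rfl | h := eq_or_ne u v <;> simp [finsetWalkLength, one_apply, *]
  | succ n ih =>
    rw [pow_succ', mul_apply, finsetWalkLength, sum_biUnion]
    · rw [← sum_subset (subset_univ (G.neighborFinset u)), neighborFinset_def, ← sum_set_coe]
      · refine sum_congr rfl fun w _ => ?_
        rw [sum_map, ih, mul_sum]
        rfl
      · intro w _ hw
        rw [hM u w (by simpa using hw), zero_mul]
    · rintro ⟨x, _⟩ - ⟨y, _⟩ - hxy
      simp only [Function.onFun, Finset.disjoint_left, mem_map]
      rintro _ ⟨p, -, rfl⟩ ⟨q, -, hq⟩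
      cases hq
      exact hxy rfl

lemma natCard_walk_length_eq_and [Fintype V] [DecidableEq V] [DecidableRel G.Adj] {u v : V}
    (n : ℕ) (P : G.Walk u v → Prop) [DecidablePred P] :
    Nat.card {p : G.Walk u v // p.length = n ∧ P p} =
      ((G.finsetWalkLength n u v).filter P).card := by
  rw [← Nat.card_eq_finsetCard]
  exact Nat.card_congr (Equiv.subtypeEquivRight fun p => by simp [mem_finsetWalkLength_iff])

variable [Fintype V] [DecidableEq V] [DecidableRel G.Adj]

lemma signedAdj_apply_of_not_adj (π : G.edgeSet → ℤˣ) {u v : V} (h : ¬G.Adj u v) :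
    signedAdj G π u v = 0 := by
  simp [signedAdj, h]

lemma Walk.weight_signedAdj (π : G.edgeSet → ℤˣ) {u v : V} (p : G.Walk u v) :
    p.weight (signedAdj G π) = ∏ e : G.edgeSet, ((π e : ℤ) : ℝ) ^ p.edges.count (e : Sym2 V) := by
  let sign : Sym2 V → ℝ := fun e => if h : e ∈ G.edgeSet then ((π ⟨e, h⟩ : ℤ) : ℝ) else 1
  have hweight : p.weight (signedAdj G π) = (p.edges.map sign).prod := by
    simp only [Walk.weight, Walk.edges, List.map_map]
    refine congrArg _ (List.map_congr_left fun d _ => ?_)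
    simp [signedAdj, sign, d.adj, d.edge_mem]
    rfl
  have hsub : p.edges.toFinset ⊆ G.edgeFinset := fun e he =>
    mem_edgeFinset.mpr (p.edges_subset_edgeSet (List.mem_toFinset.mp he))
  rw [hweight, prod_list_map_count, prod_subset hsub fun e _ he => by
    rw [List.count_eq_zero_of_not_mem (mt List.mem_toFinset.mpr he), pow_zero]]
  rw [prod_subtype G.edgeFinset fun _ => mem_edgeFinset]
  exact prod_congr rfl fun e _ => by simp [sign, e.2]

open Classical in
lemma Walk.sum_weight_signedAdj {u v : V} (p : G.Walk u v) :
    ∑ π : G.edgeSet → ℤˣ, p.weight (signedAdj G π) =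
      if ∀ e ∈ G.edgeSet, Even (p.edges.count e) then 2 ^ G.edgeFinset.card else 0 := by
  simp only [Walk.weight_signedAdj, sum_pi_intUnits_prod_pow, Subtype.forall, edgeFinset_card]

end SimpleGraph

theorem parityClosedWalkCount_eq_mean_spectral_moments_general
    {V : Type*} [Fintype V] [DecidableEq V] (G : SimpleGraph V) [DecidableRel G.Adj]
    (d : ℕ) :
    (2 : ℝ) ^ G.edgeFinset.card * (parityClosedWalkCount G d : ℝ) =
      ∑ π : G.edgeSet → ℤˣ, Matrix.trace ((signedAdj G π) ^ d) := by
  classical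
  calc (2 : ℝ) ^ #G.edgeFinset * parityClosedWalkCount G d
      = ∑ v, ∑ p ∈ G.finsetWalkLength d v v,
          if ∀ e ∈ G.edgeSet, Even (p.edges.count e) then (2 : ℝ) ^ #G.edgeFinset else 0 := by
        rw [parityClosedWalkCount, Nat.cast_sum, mul_sum]
        refine sum_congr rfl fun v _ => ?_
        rw [natCard_walk_length_eq_and, ← sum_filter, sum_const, nsmul_eq_mul, mul_comm]
    _ = ∑ v, ∑ p ∈ G.finsetWalkLength d v v, ∑ π : G.edgeSet → ℤˣ, p.weight (signedAdj G π) := by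
        simp only [Walk.sum_weight_signedAdj]
    _ = ∑ π : G.edgeSet → ℤˣ, trace (signedAdj G π ^ d) := by
        simp only [trace, Matrix.diag,
          matrix_pow_apply_eq_sum_walk_weight fun _ _ => signedAdj_apply_of_not_adj _]
        rw [sum_comm]
        exact sum_congr rfl fun v _ => sum_comm

theorem parityClosedWalkCount_eq_mean_spectral_moments
    {V : Type*} [Fintype V] [DecidableEq V] (G : SimpleGraph V) [DecidableRel G.Adj]
    (d : ℕ) (hd : 0 < d) :
    (2 : ℝ) ^ G.edgeFinset.card * (parityClosedWalkCount G d : ℝ) =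
      ∑ π : G.edgeSet → ℤˣ, Matrix.trace ((signedAdj G π) ^ d) :=
  parityClosedWalkCount_eq_mean_spectral_moments_general G d
end

section
/- Let G = (V, E) be a connected finite simple graph and π a sign function on G. Then some eigenvalue μ of A_π satisfies |μ| = ρ(G) if and only if there exists a diagonal matrix D with diagonal entries ±1 such that A_π = D A_G D or A_π = −D A_G D (i.e., the signed graph G_π is switching equivalent to the all-positive signed graph G_+ or to the all-negative signed graph G_−). -/
/-!
Write `B = A_π` and `A = A_G`, so that `A = |B|` entrywise. If `B x = μ x` with `|μ| = ρ`, the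
triangle inequality gives `ρ |x| ≤ A |x|` entrywise, while `ρ • 1 - A` is positive semidefinite
since `ρ` is the largest eigenvalue of `A`; pairing with `|x|` forces `A |x| = ρ |x|`. The zero set
of a nonnegative eigenvector is closed under adjacency, so by connectivity `|x| > 0`. Equality in
the triangle inequality, row by row, then says `± B = D A D` with `D = diag (sign x)`, the sign
being that of `μ = ± ρ`. Conversely, switching preserves eigenvalues, and `ρ ≥ 0` because `ρ`
dominates the zero diagonal of `A`.
-/

open Matrix SimpleGraph

/-- `μ` is an eigenvalue of the real matrix `A`. -/
def IsEigenvalue {V : Type*} [Fintype V] (A : Matrix V V ℝ) (μ : ℝ) : Prop :=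
  ∃ x : V → ℝ, x ≠ 0 ∧ A.mulVec x = μ • x

namespace IsEigenvalue

variable {n : Type*} [Fintype n]

theorem neg {A : Matrix n n ℝ} {μ : ℝ} (h : IsEigenvalue A μ) :
    IsEigenvalue (-A) (-μ) := by
  obtain ⟨x, hx0, hx⟩ := h
  exact ⟨x, hx0, by rw [neg_mulVec, hx, neg_smul]⟩

theorem diagonal_mul_mul_diagonal [DecidableEq n] {A : Matrix n n ℝ} {μ : ℝ}
    (h : IsEigenvalue A μ) {d : n → ℝ} (hd : ∀ i, d i * d i = 1) :
    IsEigenvalue (diagonal d * A * diagonal d) μ := by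
  obtain ⟨x, hx0, hx⟩ := h
  have hdd : diagonal d * diagonal d = 1 := by
    rw [diagonal_mul_diagonal, ← diagonal_one]; exact congrArg diagonal (funext hd)
  refine ⟨diagonal d *ᵥ x, fun h0 => hx0 ?_, ?_⟩
  · rw [← one_mulVec x, ← hdd, ← mulVec_mulVec, h0, mulVec_zero]
  · rw [mulVec_mulVec, Matrix.mul_assoc, Matrix.mul_assoc, hdd, Matrix.mul_one, ← mulVec_mulVec,
      hx, mulVec_smul]

end IsEigenvalue

namespace Matrix

variable {n : Type*} [Fintype n]

theorem IsHermitian.isEigenvalue_eigenvalues [DecidableEq n] {A : Matrix n n ℝ}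
    (hA : A.IsHermitian) (i : n) : IsEigenvalue A (hA.eigenvalues i) :=
  ⟨hA.eigenvectorBasis i,
    fun h => hA.eigenvectorBasis.orthonormal.ne_zero i (by ext j; exact congrFun h j),
    hA.mulVec_eigenvectorBasis i⟩

theorem IsHermitian.posSemidef_smul_one_sub [DecidableEq n] {A : Matrix n n ℝ}
    (hA : A.IsHermitian) {ρ : ℝ} (hρ : ∀ μ, IsEigenvalue A μ → μ ≤ ρ) :
    (ρ • 1 - A).PosSemidef := by
  have hM : (ρ • 1 - A).IsHermitian := (isHermitian_one.smul (IsSelfAdjoint.all ρ)).sub hA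
  refine hM.posSemidef_iff_eigenvalues_nonneg.mpr fun i => ?_
  obtain ⟨x, hx0, hx⟩ := hM.isEigenvalue_eigenvalues i
  have hAx : IsEigenvalue A (ρ - hM.eigenvalues i) := by
    refine ⟨x, hx0, ?_⟩
    rw [sub_mulVec, smul_mulVec, one_mulVec] at hx
    rw [sub_smul, ← hx, sub_sub_cancel]
  simpa using hρ _ hAx

theorem IsHermitian.apply_le_of_forall_isEigenvalue_le [DecidableEq n] {A : Matrix n n ℝ}
    (hA : A.IsHermitian) {ρ : ℝ} (hρ : ∀ μ, IsEigenvalue A μ → μ ≤ ρ) (i : n) : A i i ≤ ρ := by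
  simpa using (hA.posSemidef_smul_one_sub hρ).diag_nonneg (i := i)

theorem PosSemidef.mulVec_eq_zero_of_nonneg_of_mulVec_nonpos {M : Matrix n n ℝ}
    (hM : M.PosSemidef) {y : n → ℝ} (hy : 0 ≤ y) (hMy : M *ᵥ y ≤ 0) : M *ᵥ y = 0 := by
  refine (hM.dotProduct_mulVec_zero_iff y).mp (le_antisymm ?_ (hM.dotProduct_mulVec_nonneg y))
  exact Finset.sum_nonpos fun i _ => mul_nonpos_of_nonneg_of_nonpos (hy i) (hMy i)

theorem abs_mulVec_le {m : Type*} (B : Matrix m n ℝ) (x : n → ℝ) :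
    |B *ᵥ x| ≤ B.map abs *ᵥ |x| := fun i => by
  simpa only [Pi.abs_apply, mulVec, dotProduct, map_apply, abs_mul] using
    Finset.abs_sum_le_sum_abs (fun j => B i j * x j) Finset.univ

theorem mulVec_abs_eq_smul_abs_of_map_abs_eq [DecidableEq n] {A B : Matrix n n ℝ}
    (hBA : B.map abs = A) (hA : A.IsHermitian) {ρ : ℝ} (hρ : ∀ μ, IsEigenvalue A μ → μ ≤ ρ)
    {μ : ℝ} {x : n → ℝ} (hBx : B *ᵥ x = μ • x) (hμ : |μ| = ρ) :
    A *ᵥ |x| = ρ • |x| := by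
  subst hBA
  have hle : ρ • |x| ≤ B.map abs *ᵥ |x| :=
    calc ρ • |x| = |B *ᵥ x| := by ext i; simp [hBx, abs_mul, hμ]
      _ ≤ B.map abs *ᵥ |x| := abs_mulVec_le B x
  have h := (hA.posSemidef_smul_one_sub hρ).mulVec_eq_zero_of_nonneg_of_mulVec_nonpos
    (abs_nonneg x) (by rw [sub_mulVec, smul_mulVec, one_mulVec]; exact sub_nonpos.mpr hle)
  rw [sub_mulVec, smul_mulVec, one_mulVec, sub_eq_zero] at h
  exact h.symm

theorem eq_diagonal_sign_mul_mul_diagonal_sign [DecidableEq n] {A B : Matrix n n ℝ}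
    (hBA : B.map abs = A) {ρ : ℝ} {x : n → ℝ} (hx : ∀ i, x i ≠ 0) (hBx : B *ᵥ x = ρ • x)
    (hAx : A *ᵥ |x| = ρ • |x|) :
    B = diagonal (fun i => (SignType.sign (x i) : ℝ)) * A *
      diagonal (fun i => (SignType.sign (x i) : ℝ)) := by
  set s : n → ℝ := fun i => SignType.sign (x i)
  have hss : ∀ i, s i * s i = 1 := fun i => by
    rcases (hx i).lt_or_gt with h | h <;> simp [s, h]
  have hs_abs : ∀ i, |s i| = 1 := fun i => by
    rcases (hx i).lt_or_gt with h | h <;> simp [s, h]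
  have hterm : ∀ i j, s i * B i j * x j = A i j * |x j| := by
    intro i
    have hrow : ∑ j, s i * B i j * x j = ∑ j, A i j * |x j| := by
      have h1 := congrFun hBx i
      have h2 := congrFun hAx i
      simp only [mulVec, dotProduct, Pi.smul_apply, Pi.abs_apply, smul_eq_mul] at h1 h2
      rw [h2, ← sign_mul_self (x i)]
      simp only [mul_assoc, ← Finset.mul_sum, h1, s]
      ring
    have hle : ∀ j ∈ Finset.univ, s i * B i j * x j ≤ A i j * |x j| := fun j _ =>
      calc s i * B i j * x j ≤ |s i * B i j * x j| := le_abs_self _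
        _ = A i j * |x j| := by rw [abs_mul, abs_mul, hs_abs, one_mul, ← hBA, map_apply]
    exact fun j => (Finset.sum_eq_sum_iff_of_le hle).mp hrow j (Finset.mem_univ j)
  ext i j
  have hsB : s i * B i j = A i j * s j := by
    refine mul_right_cancel₀ (hx j) ?_
    rw [hterm, mul_assoc, sign_mul_self]
  rw [mul_diagonal, diagonal_mul]
  calc B i j = s i * (s i * B i j) := by rw [← mul_assoc, hss, one_mul]
    _ = s i * A i j * s j := by rw [hsB, mul_assoc]

end Matrix

namespace SimpleGraph

variable {V : Type*} [Fintype V] {G : SimpleGraph V} [DecidableRel G.Adj]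

theorem Preconnected.pos_of_adjMatrix_mulVec_eq_smul [DecidableEq V] (hG : G.Preconnected)
    {ρ : ℝ} {y : V → ℝ} (hy : 0 ≤ y) (hy0 : y ≠ 0) (hAy : G.adjMatrix ℝ *ᵥ y = ρ • y) (v : V) :
    0 < y v := by
  have hadj : ∀ u w, G.Adj u w → y u = 0 → y w = 0 := by
    intro u w huw hu
    have hle : y w ≤ (G.adjMatrix ℝ *ᵥ y) u := by
      rw [adjMatrix_mulVec_apply]
      exact Finset.single_le_sum (fun t _ => hy t) ((mem_neighborFinset G u w).mpr huw)
    rw [hAy, Pi.smul_apply, hu, smul_zero] at hle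
    exact le_antisymm hle (hy w)
  have hwalk : ∀ {u w} (_ : G.Walk u w), y u = 0 → y w = 0 := by
    intro u w p
    induction p with
    | nil => exact id
    | cons h _ ih => exact fun hu => ih (hadj _ _ h hu)
  exact (hy v).lt_of_ne fun hv => hy0 (funext fun w => hwalk (hG v w).some hv.symm)

theorem map_abs_signedAdj [DecidableEq V] (π : G.edgeSet → ℤˣ) :
    (signedAdj G π).map abs = G.adjMatrix ℝ := by
  ext u v
  by_cases h : G.Adj u v
  · rcases Int.units_eq_one_or (π ⟨s(u, v), G.mem_edgeSet.mpr h⟩) with he | he <;>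
      simp [signedAdj, h, he]
  · simp [signedAdj, h]

end SimpleGraph

theorem signed_spectral_radius_eq_iff_switching_equivalent
    {V : Type*} [Fintype V] [DecidableEq V] (G : SimpleGraph V) [DecidableRel G.Adj]
    (hG : G.Connected) (ρ : ℝ)
    (hρ : IsEigenvalue (G.adjMatrix ℝ) ρ)
    (hmax : ∀ μ : ℝ, IsEigenvalue (G.adjMatrix ℝ) μ → μ ≤ ρ)
    (π : G.edgeSet → ℤˣ) :
    (∃ μ : ℝ, IsEigenvalue (signedAdj G π) μ ∧ |μ| = ρ) ↔
      ∃ d : V → ℝ, (∀ v, d v = 1 ∨ d v = -1) ∧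
        (signedAdj G π = Matrix.diagonal d * G.adjMatrix ℝ * Matrix.diagonal d ∨
         signedAdj G π = -(Matrix.diagonal d * G.adjMatrix ℝ * Matrix.diagonal d)) := by
  have hBA := map_abs_signedAdj π
  have hA := G.isHermitian_adjMatrix ℝ
  constructor
  · rintro ⟨μ, ⟨x, hx0, hBx⟩, hμ⟩
    have hAx := mulVec_abs_eq_smul_abs_of_map_abs_eq hBA hA hmax hBx hμ
    have hx : ∀ v, x v ≠ 0 := fun v => abs_pos.mp <|
      hG.preconnected.pos_of_adjMatrix_mulVec_eq_smul (abs_nonneg x) (by simpa using hx0) hAx v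
    refine ⟨fun v => SignType.sign (x v), fun v => ?_, ?_⟩
    · rcases (hx v).lt_or_gt with h | h <;> simp [h]
    obtain rfl | rfl := (abs_eq (hμ ▸ abs_nonneg μ)).mp hμ
    · exact Or.inl (eq_diagonal_sign_mul_mul_diagonal_sign hBA hx hBx hAx)
    · refine Or.inr (neg_eq_iff_eq_neg.mp (eq_diagonal_sign_mul_mul_diagonal_sign ?_ hx ?_ hAx))
      · rw [← hBA]; ext; simp
      · rw [neg_mulVec, hBx, neg_smul, neg_neg]
  · rintro ⟨d, hd, hB⟩
    have hdd : ∀ v, d v * d v = 1 := fun v => by rcases hd v with h | h <;> simp [h]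
    have hρ0 : 0 ≤ ρ := by
      obtain ⟨v⟩ := hG.nonempty
      simpa using hA.apply_le_of_forall_isEigenvalue_le hmax v
    have hDAD := hρ.diagonal_mul_mul_diagonal hdd
    rcases hB with hB | hB
    · exact ⟨ρ, hB ▸ hDAD, abs_of_nonneg hρ0⟩
    · exact ⟨-ρ, hB ▸ hDAD.neg, by rw [abs_neg, abs_of_nonneg hρ0]⟩
end

section
/- Let G = (V, E) be a connected finite simple graph and π a sign function on G. Then ρ(G) is an eigenvalue of A_π if and only if there exists a diagonal matrix D with diagonal entries ±1 such that A_π = D A_G D; and −ρ(G) is an eigenvalue of A_π if and only if there exists such a D with A_π = −D A_G D. -/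
open Matrix SimpleGraph

/-!
If `A_π x = ρ x` with `x ≠ 0`, then `x ⬝ A_π x ≤ |x| ⬝ A_G |x| ≤ ρ ‖x‖²` (the second step is the
Rayleigh bound, as `ρ` is the top eigenvalue of `A_G`), and the ends agree, so equality holds
throughout. Hence `|x|` is a nonnegative eigenvector of `A_G` for `ρ`, which has no zero entries
because `G` is connected, and the termwise equality `x_u (A_π)_{uv} x_v = |x_u| |x_v| (A_G)_{uv}`
forces `A_π = D A_G D` with `D = diag (sign x)`. Conversely `D A_G D` is conjugate to `A_G` since
`D² = 1`. The statement for `-ρ` is the one for `ρ` applied to the sign function `-π`.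
-/

namespace Matrix

variable {n : Type*}

lemma mul_mul_le_abs_mul_abs_mul_abs (B : Matrix n n ℝ) (x : n → ℝ) (p : n × n) :
    x p.1 * B p.1 p.2 * x p.2 ≤ |x| p.1 * B.map abs p.1 p.2 * |x| p.2 := by
  simpa only [Pi.abs_apply, map_apply, abs_mul] using le_abs_self (x p.1 * B p.1 p.2 * x p.2)

variable [Fintype n]

lemma isEigenvalue_neg_iff {A : Matrix n n ℝ} {μ : ℝ} :
    IsEigenvalue (-A) (-μ) ↔ IsEigenvalue A μ := by
  simp only [IsEigenvalue, neg_mulVec, neg_smul, neg_inj]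

lemma dotProduct_mulVec_eq_sum (B : Matrix n n ℝ) (x : n → ℝ) :
    x ⬝ᵥ (B *ᵥ x) = ∑ p : n × n, x p.1 * B p.1 p.2 * x p.2 := by
  simp [dotProduct, mulVec, Finset.mul_sum, Fintype.sum_prod_type, mul_assoc]

lemma dotProduct_mulVec_le_abs (B : Matrix n n ℝ) (x : n → ℝ) :
    x ⬝ᵥ (B *ᵥ x) ≤ |x| ⬝ᵥ (B.map abs *ᵥ |x|) := by
  rw [dotProduct_mulVec_eq_sum, dotProduct_mulVec_eq_sum]
  exact Finset.sum_le_sum fun p _ => mul_mul_le_abs_mul_abs_mul_abs B x p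

variable [DecidableEq n]

lemma eq_diagonal_sign_mul_map_abs_mul_diagonal_sign {B : Matrix n n ℝ} {x : n → ℝ}
    (hx : ∀ v, x v ≠ 0) (h : x ⬝ᵥ (B *ᵥ x) = |x| ⬝ᵥ (B.map abs *ᵥ |x|)) :
    B = diagonal (fun v => (SignType.sign (x v) : ℝ)) * B.map abs *
      diagonal (fun v => (SignType.sign (x v) : ℝ)) := by
  rw [dotProduct_mulVec_eq_sum, dotProduct_mulVec_eq_sum] at h
  have hterm := (Finset.sum_eq_sum_iff_of_le fun p _ => mul_mul_le_abs_mul_abs_mul_abs B x p).mp h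
  ext u v
  have huv : x u * B u v * x v = |x u| * |B u v| * |x v| := hterm (u, v) (Finset.mem_univ _)
  rw [← sign_mul_self (x u), ← sign_mul_self (x v)] at huv
  rw [mul_diagonal, diagonal_mul, map_apply]
  apply mul_left_cancel₀ (mul_ne_zero (hx u) (hx v))
  linear_combination huv

lemma diagonal_mul_self_of_eq_one_or_eq_neg_one {d : n → ℝ} (hd : ∀ v, d v = 1 ∨ d v = -1) :
    diagonal d * diagonal d = 1 := by
  rw [diagonal_mul_diagonal, ← diagonal_one]
  congr 1
  funext v
  rcases hd v with h | h <;> simp [h]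

lemma IsEigenvalue.mul_mul_of_mul_self_eq_one {A P : Matrix n n ℝ} {μ : ℝ} (hP : P * P = 1)
    (h : IsEigenvalue A μ) : IsEigenvalue (P * A * P) μ := by
  obtain ⟨x, hx, hAx⟩ := h
  refine ⟨P *ᵥ x, fun h0 => hx ?_, ?_⟩
  · simpa [mulVec_mulVec, hP] using congrArg (P *ᵥ ·) h0
  · rw [← mulVec_mulVec, ← mulVec_mulVec, mulVec_mulVec x P P, hP, one_mulVec, hAx, mulVec_smul]

lemma isEigenvalue_iff_mem_spectrum {A : Matrix n n ℝ} {μ : ℝ} :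
    IsEigenvalue A μ ↔ μ ∈ spectrum ℝ A := by
  rw [← spectrum_toLin', ← Module.End.hasEigenvalue_iff_mem_spectrum]
  refine ⟨fun ⟨x, hx, hAx⟩ => Module.End.hasEigenvalue_of_hasEigenvector
    ⟨Module.End.mem_eigenspace_iff.mpr (by simpa using hAx), hx⟩, fun h => ?_⟩
  obtain ⟨x, hx⟩ := h.exists_hasEigenvector
  exact ⟨x, hx.2, by simpa using Module.End.mem_eigenspace_iff.mp hx.1⟩

lemma posSemidef_smul_one_sub_of_forall_isEigenvalue_le {A : Matrix n n ℝ} (hA : A.IsHermitian)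
    {ρ : ℝ} (hρ : ∀ μ, IsEigenvalue A μ → μ ≤ ρ) : (ρ • 1 - A).PosSemidef := by
  refine posSemidef_iff_isHermitian_and_spectrum_nonneg.mpr
    ⟨(isHermitian_one.smul (IsSelfAdjoint.all ρ)).sub hA, ?_⟩
  rw [← Algebra.algebraMap_eq_smul_one, ← spectrum.singleton_sub_eq]
  rintro _ ⟨_, rfl, μ, hμ, rfl⟩
  exact sub_nonneg.mpr (hρ μ (isEigenvalue_iff_mem_spectrum.mpr hμ))

lemma dotProduct_smul_one_sub_mulVec (A : Matrix n n ℝ) (ρ : ℝ) (y : n → ℝ) :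
    star y ⬝ᵥ ((ρ • 1 - A) *ᵥ y) = ρ * (y ⬝ᵥ y) - y ⬝ᵥ (A *ᵥ y) := by
  rw [sub_mulVec, dotProduct_sub, smul_mulVec, one_mulVec, dotProduct_smul, smul_eq_mul,
    star_trivial]

lemma dotProduct_mulVec_le_of_forall_isEigenvalue_le {A : Matrix n n ℝ} (hA : A.IsHermitian)
    {ρ : ℝ} (hρ : ∀ μ, IsEigenvalue A μ → μ ≤ ρ) (y : n → ℝ) :
    y ⬝ᵥ (A *ᵥ y) ≤ ρ * (y ⬝ᵥ y) := by
  have := (posSemidef_smul_one_sub_of_forall_isEigenvalue_le hA hρ).dotProduct_mulVec_nonneg y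
  rw [dotProduct_smul_one_sub_mulVec] at this
  linarith

lemma mulVec_eq_smul_of_dotProduct_mulVec_eq {A : Matrix n n ℝ} (hA : A.IsHermitian)
    {ρ : ℝ} (hρ : ∀ μ, IsEigenvalue A μ → μ ≤ ρ) {y : n → ℝ}
    (h : y ⬝ᵥ (A *ᵥ y) = ρ * (y ⬝ᵥ y)) : A *ᵥ y = ρ • y := by
  have := ((posSemidef_smul_one_sub_of_forall_isEigenvalue_le hA hρ).dotProduct_mulVec_zero_iff
    y).mp (by rw [dotProduct_smul_one_sub_mulVec, h, sub_self])
  rw [sub_mulVec, smul_mulVec, one_mulVec, sub_eq_zero] at this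
  exact this.symm

end Matrix

namespace SimpleGraph

variable {V : Type*} [Fintype V] {G : SimpleGraph V} [DecidableRel G.Adj]

lemma Connected.forall_pos_of_adjMatrix_mulVec_eq_smul (hG : G.Connected) {y : V → ℝ}
    (hy : 0 ≤ y) (hy0 : y ≠ 0) {ρ : ℝ} (h : G.adjMatrix ℝ *ᵥ y = ρ • y) (v : V) : 0 < y v := by
  have hzero_of_adj : ∀ {w u}, G.Adj w u → y w = 0 → y u = 0 := fun {w u} hwu hw => by
    have hsum : ∑ u ∈ G.neighborFinset w, y u = 0 := by
      rw [← adjMatrix_mulVec_apply, h, Pi.smul_apply, hw, smul_zero]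
    exact (Finset.sum_eq_zero_iff_of_nonneg fun u _ => hy u).mp hsum u
      ((mem_neighborFinset G w u).mpr hwu)
  have hzero_of_walk : ∀ {w u} (p : G.Walk w u), y w = 0 → y u = 0 := fun p => by
    induction p with
    | nil => exact id
    | cons hwu _ ih => exact ih ∘ hzero_of_adj hwu
  refine (hy v).lt_of_ne fun hv => hy0 (funext fun u => ?_)
  exact hzero_of_walk (hG.preconnected v u).some hv.symm

end SimpleGraph

section SignedGraph

variable {V : Type*} [Fintype V] [DecidableEq V] {G : SimpleGraph V} [DecidableRel G.Adj]

lemma signedAdj_map_abs (π : G.edgeSet → ℤˣ) : (signedAdj G π).map abs = G.adjMatrix ℝ := by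
  ext u v
  by_cases h : G.Adj u v
  · rcases Int.units_eq_one_or (π ⟨s(u, v), G.mem_edgeSet.mpr h⟩) with hπ | hπ <;>
      simp [signedAdj, h, hπ]
  · simp [signedAdj, h]

lemma neg_signedAdj (π : G.edgeSet → ℤˣ) : -signedAdj G π = signedAdj G (-π) := by
  ext u v
  by_cases h : G.Adj u v <;> simp [signedAdj, h]

lemma exists_switching_of_isEigenvalue_signedAdj (hG : G.Connected) {ρ : ℝ}
    (hmax : ∀ μ : ℝ, IsEigenvalue (G.adjMatrix ℝ) μ → μ ≤ ρ) {π : G.edgeSet → ℤˣ}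
    (h : IsEigenvalue (signedAdj G π) ρ) :
    ∃ d : V → ℝ, (∀ v, d v = 1 ∨ d v = -1) ∧
      signedAdj G π = diagonal d * G.adjMatrix ℝ * diagonal d := by
  obtain ⟨x, hx, hBx⟩ := h
  have hA : (G.adjMatrix ℝ).IsHermitian := G.isHermitian_adjMatrix ℝ
  have hxx : |x| ⬝ᵥ |x| = x ⬝ᵥ x := by simp [dotProduct, abs_mul_abs_self]
  have hquad : x ⬝ᵥ (signedAdj G π *ᵥ x) = |x| ⬝ᵥ (G.adjMatrix ℝ *ᵥ |x|) := by
    refine le_antisymm (signedAdj_map_abs π ▸ dotProduct_mulVec_le_abs _ x) ?_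
    calc |x| ⬝ᵥ (G.adjMatrix ℝ *ᵥ |x|) ≤ ρ * (|x| ⬝ᵥ |x|) :=
          dotProduct_mulVec_le_of_forall_isEigenvalue_le hA hmax |x|
      _ = x ⬝ᵥ (signedAdj G π *ᵥ x) := by rw [hxx, hBx, dotProduct_smul, smul_eq_mul]
  have hAx : G.adjMatrix ℝ *ᵥ |x| = ρ • |x| := by
    refine mulVec_eq_smul_of_dotProduct_mulVec_eq hA hmax ?_
    rw [← hquad, hBx, dotProduct_smul, smul_eq_mul, hxx]
  have hx0 : ∀ v, x v ≠ 0 := fun v => abs_pos.mp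
    (hG.forall_pos_of_adjMatrix_mulVec_eq_smul (abs_nonneg x) (by simpa using hx) hAx v)
  refine ⟨fun v => SignType.sign (x v), fun v => ?_, ?_⟩
  · rcases (hx0 v).lt_or_gt with hv | hv <;> simp [hv]
  · rw [← signedAdj_map_abs π]
    exact eq_diagonal_sign_mul_map_abs_mul_diagonal_sign hx0 (signedAdj_map_abs π ▸ hquad)

lemma isEigenvalue_signedAdj_iff_exists_switching (hG : G.Connected) {ρ : ℝ}
    (hρ : IsEigenvalue (G.adjMatrix ℝ) ρ)
    (hmax : ∀ μ : ℝ, IsEigenvalue (G.adjMatrix ℝ) μ → μ ≤ ρ) (π : G.edgeSet → ℤˣ) :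
    IsEigenvalue (signedAdj G π) ρ ↔ ∃ d : V → ℝ, (∀ v, d v = 1 ∨ d v = -1) ∧
      signedAdj G π = diagonal d * G.adjMatrix ℝ * diagonal d :=
  ⟨exists_switching_of_isEigenvalue_signedAdj hG hmax, fun ⟨_, hd, hB⟩ =>
    hB ▸ hρ.mul_mul_of_mul_self_eq_one (diagonal_mul_self_of_eq_one_or_eq_neg_one hd)⟩

end SignedGraph

theorem signed_has_pm_spectral_radius_iff_switching
    {V : Type*} [Fintype V] [DecidableEq V] (G : SimpleGraph V) [DecidableRel G.Adj]
    (hG : G.Connected) (ρ : ℝ)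
    (hρ : IsEigenvalue (G.adjMatrix ℝ) ρ)
    (hmax : ∀ μ : ℝ, IsEigenvalue (G.adjMatrix ℝ) μ → μ ≤ ρ)
    (π : G.edgeSet → ℤˣ) :
    (IsEigenvalue (signedAdj G π) ρ ↔
      ∃ d : V → ℝ, (∀ v, d v = 1 ∨ d v = -1) ∧
        signedAdj G π = Matrix.diagonal d * G.adjMatrix ℝ * Matrix.diagonal d) ∧
    (IsEigenvalue (signedAdj G π) (-ρ) ↔
      ∃ d : V → ℝ, (∀ v, d v = 1 ∨ d v = -1) ∧
        signedAdj G π = -(Matrix.diagonal d * G.adjMatrix ℝ * Matrix.diagonal d)) := by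
  refine ⟨isEigenvalue_signedAdj_iff_exists_switching hG hρ hmax π, ?_⟩
  rw [← isEigenvalue_neg_iff, neg_neg, neg_signedAdj,
    isEigenvalue_signedAdj_iff_exists_switching hG hρ hmax]
  simp only [← neg_signedAdj, neg_eq_iff_eq_neg]
end

section
/- Let k ≥ 3, let S be a finite set with |S| = k, and let i, j ∈ S be two distinct distinguished vertices; the k − 2 elements of S \ {i, j} are called core vertices. Let m : S × S → ℕ satisfy m(x,x) = 0 for all x and m(x,y) = m(x,y') for every x ∈ S and all y, y' ∈ S \ {x}. If for every core vertex v one has Σ_{u∈S} m(v,u) = Σ_{u∈S} m(u,v), then for every core vertex v: m(i,j) + m(j,i) = 2·m(v,i) = 2·m(v,j). In particular, m(v,i) = m(u,i) for any two core vertices v, u. -/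
open Finset

theorem core_vertex_arc_multiplicities
    {S : Type*} [Fintype S] [DecidableEq S] (k : ℕ) (hk : 3 ≤ k)
    (hcard : Fintype.card S = k) (i j : S) (hij : i ≠ j)
    (m : S → S → ℕ)
    (hdiag : ∀ x, m x x = 0)
    (huniform : ∀ x y y', y ≠ x → y' ≠ x → m x y = m x y')
    (heuler : ∀ v, v ≠ i → v ≠ j → (∑ u : S, m v u) = ∑ u : S, m u v) :
    (∀ v, v ≠ i → v ≠ j → m i j + m j i = 2 * m v i ∧ m i j + m j i = 2 * m v j) ∧
    (∀ v u, v ≠ i → v ≠ j → u ≠ i → u ≠ j → m v i = m u i) := by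
  classical
  set c : S → ℕ := fun x => if x = i then m i j else m x i with hc
  have hcA : ∀ x y, y ≠ x → m x y = c x := by
    intro x y hyx
    by_cases hxi : x = i
    · subst hxi
      simp only [hc, if_pos rfl]
      exact huniform x y j hyx (Ne.symm hij)
    · simp only [hc, if_neg hxi]
      exact huniform x y i hyx (Ne.symm hxi)
  have hout : ∀ v : S, (∑ u : S, m v u) = (k - 1) * c v := by
    intro v
    rw [← Finset.sum_erase Finset.univ (hdiag v)]
    rw [Finset.sum_congr rfl (fun u hu => hcA v u (Finset.ne_of_mem_erase hu))]
    rw [Finset.sum_const, Finset.card_erase_of_mem (Finset.mem_univ v),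
      Finset.card_univ, hcard, smul_eq_mul]
  have hin : ∀ v : S, (∑ u : S, m u v) = ∑ u ∈ Finset.univ.erase v, c u := by
    intro v
    rw [← Finset.sum_erase (f := fun u => m u v) Finset.univ (hdiag v)]
    exact Finset.sum_congr rfl (fun u hu => hcA u v (Ne.symm (Finset.ne_of_mem_erase hu)))
  have hcore : ∀ v, v ≠ i → v ≠ j → k * c v = ∑ u : S, c u := by
    intro v hvi hvj
    have h := heuler v hvi hvj
    rw [hout v, hin v] at h
    have h2 : ∑ u ∈ Finset.univ.erase v, c u + c v = ∑ u : S, c u :=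
      Finset.sum_erase_add _ _ (Finset.mem_univ v)
    have hk1 : (k - 1) + 1 = k := Nat.sub_add_cancel (by omega)
    calc k * c v = ((k - 1) + 1) * c v := by rw [hk1]
      _ = (k - 1) * c v + c v := by ring
      _ = ∑ u ∈ Finset.univ.erase v, c u + c v := by rw [h]
      _ = ∑ u : S, c u := h2
  have hcc : ∀ v u, v ≠ i → v ≠ j → u ≠ i → u ≠ j → c v = c u := by
    intro v u hvi hvj hui huj
    have := (hcore v hvi hvj).trans (hcore u hui huj).symm
    exact Nat.eq_of_mul_eq_mul_left (by omega) this
  have hmain : ∀ v, v ≠ i → v ≠ j → 2 * c v = c i + c j := by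
    intro v hvi hvj
    have hjmem : j ∈ Finset.univ.erase i := Finset.mem_erase.mpr ⟨Ne.symm hij, Finset.mem_univ j⟩
    have hsplit : ∑ u : S, c u
        = c i + (c j + ∑ u ∈ (Finset.univ.erase i).erase j, c u) := by
      rw [Finset.add_sum_erase _ _ hjmem, Finset.add_sum_erase _ _ (Finset.mem_univ i)]
    have hrest : ∑ u ∈ (Finset.univ.erase i).erase j, c u = (k - 2) * c v := by
      have hconst : ∀ w ∈ (Finset.univ.erase i).erase j, c w = c v := by
        intro w hw
        rw [Finset.mem_erase, Finset.mem_erase] at hw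
        exact hcc w v hw.2.1 hw.1 hvi hvj
      rw [Finset.sum_congr rfl hconst, Finset.sum_const, Finset.card_erase_of_mem hjmem,
        Finset.card_erase_of_mem (Finset.mem_univ i), Finset.card_univ, hcard, smul_eq_mul]
      congr 1
    have h1 : k * c v = c i + c j + (k - 2) * c v := by
      rw [hcore v hvi hvj, hsplit, hrest]; ring
    have h2 : k * c v = (k - 2) * c v + 2 * c v := by
      have : (k - 2) + 2 = k := Nat.sub_add_cancel (by omega)
      calc k * c v = ((k - 2) + 2) * c v := by rw [this]
        _ = (k - 2) * c v + 2 * c v := by ring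
    set t := (k - 2) * c v with ht
    omega
  constructor
  · intro v hvi hvj
    have e1 : m i j = c i := hcA i j (Ne.symm hij)
    have e2 : m j i = c j := hcA j i hij
    have e3 : m v i = c v := hcA v i (Ne.symm hvi)
    have e4 : m v j = c v := hcA v j (Ne.symm hvj)
    have := hmain v hvi hvj
    constructor <;> omega
  · intro v u hvi hvj hui huj
    rw [hcA v i (Ne.symm hvi), hcA u i (Ne.symm hui)]
    exact hcc v u hvi hvj hui huj
end

section
/- Let k ≥ 3 and let Ĝ = (V, E) be a finite simple graph, with W = V ∪ (E × {1,…,k−2}) the vertex set of the k-power hypergraph Ĝ^{(k)}. Let m : W × W → ℕ be an arc-multiplicity function that is Eulerian, supported on hyperedges, and hyperedge-uniform. Then the restriction of m to V × V is Eulerian, i.e., for every i ∈ V, Σ_{j∈V} m(i,j) = Σ_{j∈V} m(j,i). -/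
open Finset SimpleGraph

/-- Membership of a vertex of the `k`-power hypergraph `Ĝ^{(k)}` (whose vertex set is
`V ⊕ (E × Fin (k-2))`) in the hyperedge `e^{(k)}` obtained from the edge `e` of `Ĝ`. -/
def inHyperedge {V : Type*} (G : SimpleGraph V) (k : ℕ) (e : G.edgeSet) :
    V ⊕ (G.edgeSet × Fin (k - 2)) → Prop
  | Sum.inl v => v ∈ (e : Sym2 V)
  | Sum.inr (e', _) => e' = e

/-- Reindexing a sum over edges (with a summand supported on edges through `i`) as a
sum over the neighbors of `i`. -/
private lemma sum_edge_aux {V : Type*} [Fintype V] [DecidableEq V] (G : SimpleGraph V)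
    [DecidableRel G.Adj] (i : V) (h : G.edgeSet → ℕ) (f : V → ℕ)
    (hf0 : ∀ j, ¬ G.Adj i j → f j = 0)
    (hfe : ∀ j (hj : G.Adj i j), h ⟨s(i, j), hj⟩ = f j)
    (h0 : ∀ e : G.edgeSet, i ∉ (e : Sym2 V) → h e = 0) :
    ∑ e : G.edgeSet, h e = ∑ j : V, f j := by
  classical
  have h1 : ∑ j : V, f j = ∑ j ∈ G.neighborFinset i, f j := by
    refine (Finset.sum_subset (Finset.subset_univ _) ?_).symm
    intro j _ hj
    exact hf0 j (by simpa using hj)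
  have h2 : ∑ e : G.edgeSet, h e
      = ∑ e ∈ Finset.univ.filter (fun e : G.edgeSet => i ∈ (e : Sym2 V)), h e := by
    refine (Finset.sum_filter_of_ne ?_).symm
    intro e _ hne
    by_contra hi
    exact hne (h0 e hi)
  rw [h1, h2]
  refine Finset.sum_bij' (fun e he => Sym2.Mem.other' (Finset.mem_filter.mp he).2)
    (fun j hj => ⟨s(i, j), by simpa using hj⟩) ?_ ?_ ?_ ?_ ?_
  · intro e he
    have hmem := (Finset.mem_filter.mp he).2
    have hspec := Sym2.other_spec' hmem
    have : s(i, Sym2.Mem.other' hmem) ∈ G.edgeSet := by rw [hspec]; exact e.2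
    rw [SimpleGraph.mem_neighborFinset]
    exact G.mem_edgeSet.mp this
  · intro j hj
    exact Finset.mem_filter.mpr ⟨Finset.mem_univ _, Sym2.mem_mk_left i j⟩
  · intro e he
    apply Subtype.ext
    exact Sym2.other_spec' (Finset.mem_filter.mp he).2
  · intro j hj
    exact Sym2.congr_right.mp (Sym2.other_spec' _)
  · intro e he
    have hmem := (Finset.mem_filter.mp he).2
    have hadj : G.Adj i (Sym2.Mem.other' hmem) := by
      have : s(i, Sym2.Mem.other' hmem) ∈ G.edgeSet := by
        rw [Sym2.other_spec' hmem]; exact e.2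
      exact G.mem_edgeSet.mp this
    rw [← hfe _ hadj]
    exact congrArg h (Subtype.ext (Sym2.other_spec' hmem).symm)

theorem restriction_to_base_is_eulerian
    {V : Type*} [Fintype V] [DecidableEq V] (G : SimpleGraph V) [DecidableRel G.Adj]
    (k : ℕ) (hk : 3 ≤ k)
    (m : (V ⊕ (G.edgeSet × Fin (k - 2))) → (V ⊕ (G.edgeSet × Fin (k - 2))) → ℕ)
    (hdiag : ∀ x, m x x = 0)
    (heuler : ∀ x, ∑ y, m x y = ∑ y, m y x)
    (hsupp : ∀ x y, m x y ≠ 0 → ∃ e : G.edgeSet, inHyperedge G k e x ∧ inHyperedge G k e y)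
    (hunif : ∀ (e : G.edgeSet) x y y', inHyperedge G k e x → inHyperedge G k e y →
        inHyperedge G k e y' → y ≠ x → y' ≠ x → m x y = m x y') :
    ∀ i : V, ∑ j : V, m (Sum.inl i) (Sum.inl j) = ∑ j : V, m (Sum.inl j) (Sum.inl i) := by
  classical
  obtain ⟨K, rfl⟩ : ∃ K, k = K + 3 := ⟨k - 3, by omega⟩
  intro i
  -- out-multiplicity is zero to non-neighbors
  have hM0 : ∀ j, ¬ G.Adj i j → m (Sum.inl i) (Sum.inl j) = 0 := by
    intro j hj
    by_contra h0
    obtain ⟨e, h1, h2⟩ := hsupp _ _ h0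
    have h1' : i ∈ (e : Sym2 V) := h1
    have h2' : j ∈ (e : Sym2 V) := h2
    rcases eq_or_ne i j with rfl | hne
    · exact h0 (hdiag _)
    · exact hj (G.mem_edgeSet.mp (((Sym2.mem_and_mem_iff hne).mp ⟨h1', h2'⟩) ▸ e.2))
  have hN0 : ∀ j, ¬ G.Adj i j → m (Sum.inl j) (Sum.inl i) = 0 := by
    intro j hj
    by_contra h0
    obtain ⟨e, h1, h2⟩ := hsupp _ _ h0
    have h1' : j ∈ (e : Sym2 V) := h1
    have h2' : i ∈ (e : Sym2 V) := h2
    rcases eq_or_ne i j with rfl | hne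
    · exact h0 (hdiag _)
    · exact hj (G.mem_edgeSet.mp (((Sym2.mem_and_mem_iff hne).mp ⟨h2', h1'⟩) ▸ e.2))
  -- Key per-neighbor identity coming from Eulerianity at core vertices
  have key : ∀ j (hj : G.Adj i j),
      2 * (∑ t : Fin (K + 3 - 2), m (Sum.inr (⟨s(i,j), hj⟩, t)) (Sum.inl i))
        = (K + 1) * (m (Sum.inl i) (Sum.inl j) + m (Sum.inl j) (Sum.inl i)) := by
    intro j hj
    set e : G.edgeSet := ⟨s(i,j), hj⟩ with he
    have hie : i ∈ (e : Sym2 V) := Sym2.mem_mk_left i j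
    have hje : j ∈ (e : Sym2 V) := Sym2.mem_mk_right i j
    have hij : i ≠ j := G.ne_of_adj hj
    set a : Fin (K + 3 - 2) → ℕ := fun t => m (Sum.inr (e, t)) (Sum.inl i) with ha
    set S : ℕ := ∑ t, a t with hS
    set Mi : ℕ := m (Sum.inl i) (Sum.inl j) with hMi
    set Ni : ℕ := m (Sum.inl j) (Sum.inl i) with hNi
    -- uniformity of out-arcs from a core vertex
    have ha_out : ∀ (t : Fin (K + 3 - 2)) (y : V ⊕ (G.edgeSet × Fin (K + 3 - 2))),
        inHyperedge G (K + 3) e y → y ≠ Sum.inr (e, t) → m (Sum.inr (e, t)) y = a t := by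
      intro t y hy hne
      exact hunif e (Sum.inr (e, t)) y (Sum.inl i) rfl hy hie hne (by simp)
    -- Euler equation at each core vertex
    have euler_t : ∀ t : Fin (K + 3 - 2),
        (2 + K) * a t = Mi + Ni + ∑ t' ∈ Finset.univ.erase t, a t' := by
      intro t
      have hE := heuler (Sum.inr (e, t))
      rw [Fintype.sum_sum_type, Fintype.sum_sum_type] at hE
      -- outgoing to base vertices
      have hout_v : (∑ v : V, m (Sum.inr (e, t)) (Sum.inl v)) = a t + a t := by
        have hpair : ∑ v ∈ ({i, j} : Finset V), m (Sum.inr (e, t)) (Sum.inl v)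
            = a t + a t := by
          rw [Finset.sum_pair hij, ha_out t (Sum.inl i) hie (by simp),
            ha_out t (Sum.inl j) hje (by simp)]
        rw [← hpair]
        symm
        apply Finset.sum_subset (Finset.subset_univ _)
        intro v _ hv
        by_contra h0
        obtain ⟨e', h1, h2⟩ := hsupp _ _ h0
        have h1' : e = e' := h1
        have h2' : v ∈ (e' : Sym2 V) := h2
        rw [← h1'] at h2'
        simp only [he] at h2'
        rw [Sym2.mem_iff] at h2'
        simp only [Finset.mem_insert, Finset.mem_singleton] at hv
        tauto
      -- outgoing to core vertices
      have hout_c : (∑ p : G.edgeSet × Fin (K + 3 - 2), m (Sum.inr (e, t)) (Sum.inr p))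
          = ∑ t' ∈ Finset.univ.erase t, a t := by
        rw [Fintype.sum_prod_type]
        rw [Finset.sum_eq_single_of_mem e (Finset.mem_univ _) ?_]
        · rw [← Finset.sum_erase_add _ _ (Finset.mem_univ t), hdiag, add_zero]
          apply Finset.sum_congr rfl
          intro t' ht'
          refine ha_out t (Sum.inr (e, t')) rfl ?_
          simp only [ne_eq, Sum.inr.injEq, Prod.mk.injEq]
          intro ⟨_, h⟩
          exact (Finset.mem_erase.mp ht').1 h
        · intro e' _ hne
          apply Finset.sum_eq_zero
          intro t' _
          by_contra h0
          obtain ⟨e'', h1, h2⟩ := hsupp _ _ h0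
          have h1' : e = e'' := h1
          have h2' : e' = e'' := h2
          exact hne (h2'.trans h1'.symm)
      -- incoming from base vertices
      have hin_v : (∑ v : V, m (Sum.inl v) (Sum.inr (e, t))) = Mi + Ni := by
        have hpair : ∑ v ∈ ({i, j} : Finset V), m (Sum.inl v) (Sum.inr (e, t))
            = Mi + Ni := by
          rw [Finset.sum_pair hij,
            hunif e (Sum.inl i) (Sum.inr (e, t)) (Sum.inl j) hie rfl hje
              (by simp) (by simp [hij.symm]),
            hunif e (Sum.inl j) (Sum.inr (e, t)) (Sum.inl i) hje rfl hie
              (by simp) (by simp [hij])]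
        rw [← hpair]
        symm
        apply Finset.sum_subset (Finset.subset_univ _)
        intro v _ hv
        by_contra h0
        obtain ⟨e', h1, h2⟩ := hsupp _ _ h0
        have h1' : v ∈ (e' : Sym2 V) := h1
        have h2' : e = e' := h2
        rw [← h2'] at h1'
        simp only [he] at h1'
        rw [Sym2.mem_iff] at h1'
        simp only [Finset.mem_insert, Finset.mem_singleton] at hv
        tauto
      -- incoming from core vertices
      have hin_c : (∑ p : G.edgeSet × Fin (K + 3 - 2), m (Sum.inr p) (Sum.inr (e, t)))
          = ∑ t' ∈ Finset.univ.erase t, a t' := by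
        rw [Fintype.sum_prod_type]
        rw [Finset.sum_eq_single_of_mem e (Finset.mem_univ _) ?_]
        · rw [← Finset.sum_erase_add _ _ (Finset.mem_univ t), hdiag, add_zero]
          apply Finset.sum_congr rfl
          intro t' ht'
          refine ha_out t' (Sum.inr (e, t)) rfl ?_
          simp only [ne_eq, Sum.inr.injEq, Prod.mk.injEq]
          intro ⟨_, h⟩
          exact (Finset.mem_erase.mp ht').1 h.symm
        · intro e' _ hne
          apply Finset.sum_eq_zero
          intro t' _
          by_contra h0
          obtain ⟨e'', h1, h2⟩ := hsupp _ _ h0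
          have h1' : e' = e'' := h1
          have h2' : e = e'' := h2
          exact hne (h1'.trans h2'.symm)
      rw [hout_v, hout_c, hin_v, hin_c, Finset.sum_const] at hE
      have hcard : (Finset.univ.erase t).card = K := by
        rw [Finset.card_erase_of_mem (Finset.mem_univ _), Finset.card_univ]
        simp
      rw [hcard, smul_eq_mul] at hE
      -- hE : a t + a t + K * a t = Mi + Ni + ∑ t' ∈ erase t, a t'
      calc (2 + K) * a t = a t + a t + K * a t := by ring
        _ = Mi + Ni + ∑ t' ∈ Finset.univ.erase t, a t' := hE
    -- sum the Euler equations over all core vertices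
    have hsum : (2 + K) * S = (K + 1) * (Mi + Ni) + ∑ t, ∑ t' ∈ Finset.univ.erase t, a t' := by
      rw [hS, Finset.mul_sum]
      rw [Finset.sum_congr rfl (fun t _ => euler_t t)]
      rw [Finset.sum_add_distrib, Finset.sum_const, Finset.card_univ]
      congr 1
      simp [mul_comm]
    have hEsum : (∑ t, ∑ t' ∈ Finset.univ.erase t, a t') + S = (K + 1) * S := by
      have : ∀ t : Fin (K + 3 - 2), (∑ t' ∈ Finset.univ.erase t, a t') + a t = S := by
        intro t
        rw [hS]
        exact Finset.sum_erase_add _ _ (Finset.mem_univ t)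
      calc (∑ t, ∑ t' ∈ Finset.univ.erase t, a t') + S
          = ∑ t, ((∑ t' ∈ Finset.univ.erase t, a t') + a t) := by
            rw [Finset.sum_add_distrib, hS]
        _ = ∑ t : Fin (K + 3 - 2), S := Finset.sum_congr rfl (fun t _ => this t)
        _ = (K + 1) * S := by rw [Finset.sum_const, Finset.card_univ]; simp [mul_comm]
    -- combine: 2 * S = (K+1) * (Mi + Ni)
    have hcomb : 2 * S + ((∑ t, ∑ t' ∈ Finset.univ.erase t, a t') + S)
        = (K + 1) * (Mi + Ni) + ((∑ t, ∑ t' ∈ Finset.univ.erase t, a t') + S) := by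
      calc 2 * S + ((∑ t, ∑ t' ∈ Finset.univ.erase t, a t') + S)
          = 2 * S + (K + 1) * S := by rw [hEsum]
        _ = (2 + K) * S + S := by ring
        _ = ((K + 1) * (Mi + Ni) + ∑ t, ∑ t' ∈ Finset.univ.erase t, a t') + S := by rw [hsum]
        _ = (K + 1) * (Mi + Ni) + ((∑ t, ∑ t' ∈ Finset.univ.erase t, a t') + S) := by ring
    exact Nat.add_right_cancel hcomb
  -- Euler equation at the base vertex i
  have hE := heuler (Sum.inl i)
  rw [Fintype.sum_sum_type, Fintype.sum_sum_type] at hE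
  set A : ℕ := ∑ j : V, m (Sum.inl i) (Sum.inl j) with hA
  set B : ℕ := ∑ j : V, m (Sum.inl j) (Sum.inl i) with hB
  -- C = (K+1) * A
  have hC : (∑ p : G.edgeSet × Fin (K + 3 - 2), m (Sum.inl i) (Sum.inr p))
      = (K + 1) * A := by
    rw [Fintype.sum_prod_type]
    rw [sum_edge_aux G i _ (fun j => (K + 1) * m (Sum.inl i) (Sum.inl j))
      (fun j hj => by simp [hM0 j hj])
      (fun j hj => ?_) (fun e hie => ?_)]
    · rw [hA, Finset.mul_sum]
    · -- each term equals m (inl i) (inl j)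
      have : ∀ t : Fin (K + 3 - 2), m (Sum.inl i) (Sum.inr (⟨s(i,j), hj⟩, t))
          = m (Sum.inl i) (Sum.inl j) := by
        intro t
        exact hunif ⟨s(i,j), hj⟩ (Sum.inl i) (Sum.inr (⟨s(i,j), hj⟩, t)) (Sum.inl j)
          (Sym2.mem_mk_left i j) rfl (Sym2.mem_mk_right i j) (by simp)
          (by simp [Ne.symm (G.ne_of_adj hj)])
      rw [Finset.sum_congr rfl (fun t _ => this t), Finset.sum_const, Finset.card_univ]
      simp [mul_comm]
    · apply Finset.sum_eq_zero
      intro t _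
      by_contra h0
      obtain ⟨e', h1, h2⟩ := hsupp _ _ h0
      have h1' : i ∈ (e' : Sym2 V) := h1
      have h2' : e = e' := h2
      rw [← h2'] at h1'
      exact hie h1'
  -- 2 * D = (K+1) * (A + B)
  have hD : 2 * (∑ p : G.edgeSet × Fin (K + 3 - 2), m (Sum.inr p) (Sum.inl i))
      = (K + 1) * (A + B) := by
    rw [Fintype.sum_prod_type, Finset.mul_sum]
    rw [sum_edge_aux G i (fun e => 2 * ∑ t, m (Sum.inr (e, t)) (Sum.inl i))
      (fun j => (K + 1) * (m (Sum.inl i) (Sum.inl j) + m (Sum.inl j) (Sum.inl i)))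
      (fun j hj => by simp [hM0 j hj, hN0 j hj])
      (fun j hj => key j hj) (fun e hie => ?_)]
    · rw [hA, hB, ← Finset.sum_add_distrib, ← Finset.mul_sum]
    · rw [mul_eq_zero]
      right
      apply Finset.sum_eq_zero
      intro t _
      by_contra h0
      obtain ⟨e', h1, h2⟩ := hsupp _ _ h0
      have h1' : e = e' := h1
      have h2' : i ∈ (e' : Sym2 V) := h2
      rw [← h1'] at h2'
      exact hie h2'
  -- combine everything: A = B
  rw [hC] at hE
  -- hE : A + (K+1)*A = B + D
  have hfin : (K + 3) * A + ((K + 1) * A + 2 * B) = (K + 3) * B + ((K + 1) * A + 2 * B) := by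
    calc (K + 3) * A + ((K + 1) * A + 2 * B)
        = 2 * (A + (K + 1) * A) + 2 * B := by ring
      _ = 2 * (B + ∑ p : G.edgeSet × Fin (K + 3 - 2), m (Sum.inr p) (Sum.inl i)) + 2 * B := by
          rw [hE]
      _ = 2 * (∑ p : G.edgeSet × Fin (K + 3 - 2), m (Sum.inr p) (Sum.inl i)) + (2 * B + 2 * B) := by
          ring
      _ = (K + 1) * (A + B) + (2 * B + 2 * B) := by rw [hD]
      _ = (K + 3) * B + ((K + 1) * A + 2 * B) := by ring
  have := Nat.add_right_cancel hfin
  exact Nat.eq_of_mul_eq_mul_left (by omega) this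
end

section
/- Let k ≥ 3 and let Ĝ = (V, E) be a finite simple graph, with W = V ∪ (E × {1,…,k−2}) the vertex set of the k-power hypergraph Ĝ^{(k)}. Let m : W × W → ℕ be Eulerian, supported on hyperedges, and hyperedge-uniform. Then 2 · Σ_{(x,y)∈W×W} m(x,y) = k(k−1) · Σ_{(i,j)∈V×V} m(i,j). Consequently, if the total number of arcs Σ_{(x,y)∈W×W} m(x,y) equals d(k−1), then Σ_{(i,j)∈V×V} m(i,j) = 2d/k and Σ_{{i,j}∈E} (m(i,j)+m(j,i))/2 = d/k; in particular k divides 2d and, if moreover every edge of Ĝ carries at least one arc, then |E| ≤ d/k. -/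
open Finset SimpleGraph

theorem arc_count_of_eulerian_power_multidigraph
    {V : Type*} [Fintype V] [DecidableEq V] (G : SimpleGraph V) [DecidableRel G.Adj]
    (k : ℕ) (hk : 3 ≤ k)
    (m : (V ⊕ (G.edgeSet × Fin (k - 2))) → (V ⊕ (G.edgeSet × Fin (k - 2))) → ℕ)
    (hdiag : ∀ x, m x x = 0)
    (heuler : ∀ x, ∑ y, m x y = ∑ y, m y x)
    (hsupp : ∀ x y, m x y ≠ 0 → ∃ e : G.edgeSet, inHyperedge G k e x ∧ inHyperedge G k e y)
    (hunif : ∀ (e : G.edgeSet) x y y', inHyperedge G k e x → inHyperedge G k e y →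
        inHyperedge G k e y' → y ≠ x → y' ≠ x → m x y = m x y') :
    2 * (∑ x, ∑ y, m x y) =
        k * (k - 1) * (∑ i : V, ∑ j : V, m (Sum.inl i) (Sum.inl j)) ∧
    ∀ d : ℕ, (∑ x, ∑ y, m x y) = d * (k - 1) →
      k * (∑ i : V, ∑ j : V, m (Sum.inl i) (Sum.inl j)) = 2 * d ∧
      k ∣ 2 * d ∧
      ((∀ i j : V, G.Adj i j → 0 < m (Sum.inl i) (Sum.inl j) + m (Sum.inl j) (Sum.inl i)) →
        k * G.edgeFinset.card ≤ d) := by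
  classical
  obtain ⟨n, rfl⟩ : ∃ n, k = n + 3 := ⟨k - 3, by omega⟩
  clear hk
  have hsub2 : n + 3 - 2 = n + 1 := rfl
  have hsub1 : n + 3 - 1 = n + 2 := rfl
  -- endpoints of an edge
  have hmem1 : ∀ e : G.edgeSet, ((e : Sym2 V)).out.1 ∈ (e : Sym2 V) := fun e =>
    Sym2.out_fst_mem _
  have hmem2 : ∀ e : G.edgeSet, ((e : Sym2 V)).out.2 ∈ (e : Sym2 V) := fun e =>
    Sym2.out_snd_mem _
  have hout : ∀ e : G.edgeSet,
      (e : Sym2 V) = s(((e : Sym2 V)).out.1, ((e : Sym2 V)).out.2) := by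
    intro e
    conv_lhs => rw [← (e : Sym2 V).out_eq]
  have hadj : ∀ e : G.edgeSet, G.Adj ((e : Sym2 V)).out.1 ((e : Sym2 V)).out.2 := by
    intro e
    have h := e.property
    rw [hout e] at h
    exact h
  have hne : ∀ e : G.edgeSet, ((e : Sym2 V)).out.1 ≠ ((e : Sym2 V)).out.2 := fun e =>
    (hadj e).ne
  -- support lemmas
  have hsVV : ∀ i j : V, m (Sum.inl i) (Sum.inl j) ≠ 0 → G.Adj i j := by
    intro i j h
    obtain ⟨e, he1, he2⟩ := hsupp _ _ h
    have hij : i ≠ j := by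
      rintro rfl
      exact h (hdiag _)
    have hmm : (e : Sym2 V) = s(i, j) :=
      (Sym2.mem_and_mem_iff hij).mp ⟨he1, he2⟩
    have hp := e.property
    rw [hmm] at hp
    exact hp
  have hsVr : ∀ (v : V) (e : G.edgeSet) (t : Fin (n + 3 - 2)),
      m (Sum.inl v) (Sum.inr (e, t)) ≠ 0 → v ∈ (e : Sym2 V) := by
    intro v e t h
    obtain ⟨f, h1, h2⟩ := hsupp _ _ h
    have : e = f := h2
    subst this
    exact h1
  have hsrV : ∀ (e : G.edgeSet) (t : Fin (n + 3 - 2)) (v : V),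
      m (Sum.inr (e, t)) (Sum.inl v) ≠ 0 → v ∈ (e : Sym2 V) := by
    intro e t v h
    obtain ⟨f, h1, h2⟩ := hsupp _ _ h
    have : e = f := h1
    subst this
    exact h2
  have hsrr : ∀ (e : G.edgeSet) (t : Fin (n + 3 - 2)) (e' : G.edgeSet) (s : Fin (n + 3 - 2)),
      m (Sum.inr (e, t)) (Sum.inr (e', s)) ≠ 0 → e' = e := by
    intro e t e' s h
    obtain ⟨f, h1, h2⟩ := hsupp _ _ h
    have he : e = f := h1
    have he' : e' = f := h2
    rw [he, he']
  -- the basic quantities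
  set cst : G.edgeSet → Fin (n + 3 - 2) → ℕ :=
    fun e t => m (Sum.inr (e, t)) (Sum.inl ((e : Sym2 V)).out.1) with hcst
  set aE : G.edgeSet → ℕ :=
    fun e => m (Sum.inl ((e : Sym2 V)).out.1) (Sum.inl ((e : Sym2 V)).out.2) with haE
  set bE : G.edgeSet → ℕ :=
    fun e => m (Sum.inl ((e : Sym2 V)).out.2) (Sum.inl ((e : Sym2 V)).out.1) with hbE
  -- uniformity consequences
  have hU1 : ∀ (e : G.edgeSet) (t : Fin (n + 3 - 2)) (v : V), v ∈ (e : Sym2 V) →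
      m (Sum.inr (e, t)) (Sum.inl v) = cst e t := by
    intro e t v hv
    exact hunif e (Sum.inr (e, t)) (Sum.inl v) (Sum.inl ((e : Sym2 V)).out.1)
      rfl hv (hmem1 e) (by simp) (by simp)
  have hU2 : ∀ (e : G.edgeSet) (t s : Fin (n + 3 - 2)), s ≠ t →
      m (Sum.inr (e, t)) (Sum.inr (e, s)) = cst e t := by
    intro e t s hst
    exact hunif e (Sum.inr (e, t)) (Sum.inr (e, s)) (Sum.inl ((e : Sym2 V)).out.1)
      rfl rfl (hmem1 e) (by simp [hst]) (by simp)
  have hU3 : ∀ (e : G.edgeSet) (t : Fin (n + 3 - 2)) (v w : V),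
      v ∈ (e : Sym2 V) → w ∈ (e : Sym2 V) → w ≠ v →
      m (Sum.inl v) (Sum.inl w) = m (Sum.inl v) (Sum.inr (e, t)) := by
    intro e t v w hv hw hwv
    exact hunif e (Sum.inl v) (Sum.inl w) (Sum.inr (e, t)) hv hw rfl
      (by simp [hwv]) (by simp)
  -- row sums at core vertices
  have hR : ∀ (e : G.edgeSet) (t : Fin (n + 3 - 2)),
      (∑ y, m (Sum.inr (e, t)) y) = (n + 2) * cst e t := by
    intro e t
    rw [Fintype.sum_sum_type]
    have h1 : (∑ v : V, m (Sum.inr (e, t)) (Sum.inl v)) = cst e t + cst e t := by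
      rw [Finset.sum_eq_add ((e : Sym2 V)).out.1 ((e : Sym2 V)).out.2 (hne e)
        (by
          intro v _ hv
          by_contra h
          have hv' := hsrV e t v h
          rw [hout e, Sym2.mem_iff] at hv'
          tauto)
        (fun h => absurd (Finset.mem_univ _) h)
        (fun h => absurd (Finset.mem_univ _) h)]
      rw [hU1 e t _ (hmem1 e), hU1 e t _ (hmem2 e)]
    have h2 : (∑ p : G.edgeSet × Fin (n + 3 - 2), m (Sum.inr (e, t)) (Sum.inr p))
        = n * cst e t := by
      rw [Fintype.sum_prod_type]
      rw [Finset.sum_eq_single e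
        (by
          intro e' _ hne'
          apply Finset.sum_eq_zero
          intro s _
          by_contra h
          exact hne' (hsrr e t e' s h))
        (fun h => absurd (Finset.mem_univ _) h)]
      rw [← Finset.sum_erase_add _ _ (Finset.mem_univ t), hdiag, add_zero]
      rw [Finset.sum_congr rfl (fun s hs => hU2 e t s (Finset.ne_of_mem_erase hs))]
      rw [Finset.sum_const, Finset.card_erase_of_mem (Finset.mem_univ t),
        Finset.card_univ, Fintype.card_fin, smul_eq_mul, hsub2, Nat.add_sub_cancel]
    rw [h1, h2]
    ring
  -- column sums: the V part
  have hCV : ∀ (e : G.edgeSet) (t : Fin (n + 3 - 2)),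
      (∑ v : V, m (Sum.inl v) (Sum.inr (e, t))) = aE e + bE e := by
    intro e t
    rw [Finset.sum_eq_add ((e : Sym2 V)).out.1 ((e : Sym2 V)).out.2 (hne e)
      (by
        intro v _ hv
        by_contra h
        have hv' := hsVr v e t h
        rw [hout e, Sym2.mem_iff] at hv'
        tauto)
      (fun h => absurd (Finset.mem_univ _) h)
      (fun h => absurd (Finset.mem_univ _) h)]
    rw [← hU3 e t _ _ (hmem1 e) (hmem2 e) (hne e).symm,
      ← hU3 e t _ _ (hmem2 e) (hmem1 e) (hne e)]
  -- column sums at core vertices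
  have hC : ∀ (e : G.edgeSet) (t : Fin (n + 3 - 2)),
      (∑ y, m y (Sum.inr (e, t))) = aE e + bE e + ∑ s ∈ Finset.univ.erase t, cst e s := by
    intro e t
    rw [Fintype.sum_sum_type]
    rw [hCV e t]
    congr 1
    rw [Fintype.sum_prod_type]
    rw [Finset.sum_eq_single e
      (by
        intro e' _ hne'
        apply Finset.sum_eq_zero
        intro s _
        by_contra h
        exact hne' (hsrr e' s e t h).symm)
      (fun h => absurd (Finset.mem_univ _) h)]
    rw [← Finset.sum_erase_add _ _ (Finset.mem_univ t), hdiag, add_zero]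
    exact Finset.sum_congr rfl (fun s hs => hU2 e s t (Finset.ne_of_mem_erase hs).symm)
  -- Euler consequences
  have hE1 : ∀ (e : G.edgeSet) (t : Fin (n + 3 - 2)),
      (n + 2) * cst e t = aE e + bE e + ∑ s ∈ Finset.univ.erase t, cst e s := by
    intro e t
    rw [← hR e t, ← hC e t]
    exact heuler _
  have hE2 : ∀ (e : G.edgeSet) (t : Fin (n + 3 - 2)),
      (n + 3) * cst e t = aE e + bE e + ∑ s : Fin (n + 3 - 2), cst e s := by
    intro e t
    calc (n + 3) * cst e t = (n + 2) * cst e t + cst e t := by ring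
      _ = aE e + bE e + (∑ s ∈ Finset.univ.erase t, cst e s + cst e t) := by
          rw [hE1 e t]; ring
      _ = aE e + bE e + ∑ s : Fin (n + 3 - 2), cst e s := by
          rw [Finset.sum_erase_add _ _ (Finset.mem_univ t)]
  have hE3 : ∀ (e : G.edgeSet) (t t' : Fin (n + 3 - 2)), cst e t = cst e t' := by
    intro e t t'
    refine Nat.eq_of_mul_eq_mul_left (show 0 < n + 3 by omega) ?_
    rw [hE2 e t, hE2 e t']
  have hE4 : ∀ (e : G.edgeSet) (t : Fin (n + 3 - 2)), 2 * cst e t = aE e + bE e := by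
    intro e t
    have hsum : (∑ s : Fin (n + 3 - 2), cst e s) = (n + 1) * cst e t := by
      rw [Finset.sum_congr rfl (fun s _ => hE3 e s t), Finset.sum_const,
        Finset.card_univ, Fintype.card_fin, smul_eq_mul, hsub2]
    have h := hE2 e t
    rw [hsum] at h
    have hx : (n + 3) * cst e t = (n + 1) * cst e t + 2 * cst e t := by ring
    rw [hx] at h
    generalize (n + 1) * cst e t = X at h
    omega
  -- the chosen core index
  set t0 : Fin (n + 3 - 2) := ⟨0, by omega⟩ with ht0
  set Csum : ℕ := ∑ e : G.edgeSet, cst e t0 with hCsum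
  -- Fact C: the V×V sum equals the incidence sum
  have hFC : ∀ i : V,
      (∑ j : V, m (Sum.inl i) (Sum.inl j))
        = ∑ e : G.edgeSet, m (Sum.inl i) (Sum.inr (e, t0)) := by
    intro i
    have hL : (∑ j : V, m (Sum.inl i) (Sum.inl j))
        = ∑ j ∈ G.neighborFinset i, m (Sum.inl i) (Sum.inl j) := by
      symm
      apply Finset.sum_subset (Finset.subset_univ _)
      intro j _ hj
      by_contra h
      exact hj ((G.mem_neighborFinset i j).mpr (hsVV i j h))
    have hRt : (∑ e : G.edgeSet, m (Sum.inl i) (Sum.inr (e, t0)))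
        = ∑ e ∈ Finset.univ.filter (fun e : G.edgeSet => i ∈ (e : Sym2 V)),
            m (Sum.inl i) (Sum.inr (e, t0)) := by
      symm
      apply Finset.sum_subset (Finset.subset_univ _)
      intro e _ he
      by_contra h
      exact he (Finset.mem_filter.mpr ⟨Finset.mem_univ _, hsVr i e t0 h⟩)
    rw [hL, hRt]
    refine Finset.sum_bij'
      (fun j hj => (⟨s(i, j), (G.mem_neighborFinset i j).mp hj⟩ : G.edgeSet))
      (fun e he => Sym2.Mem.other' (Finset.mem_filter.mp he).2)
      ?_ ?_ ?_ ?_ ?_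
    · intro j hj
      exact Finset.mem_filter.mpr ⟨Finset.mem_univ _, Sym2.mem_mk_left i j⟩
    · intro e he
      have hsp := Sym2.other_spec' (Finset.mem_filter.mp he).2
      have hp := e.property
      rw [← hsp] at hp
      exact (G.mem_neighborFinset i _).mpr hp
    · intro j hj
      exact Sym2.congr_right.mp (Sym2.other_spec' _)
    · intro e he
      exact Subtype.ext (Sym2.other_spec' _)
    · intro j hj
      exact hU3 _ t0 i j (Sym2.mem_mk_left i j) (Sym2.mem_mk_right i j)
        ((G.mem_neighborFinset i j).mp hj).ne'
  -- the main per-block sums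
  have hS : (∑ i : V, ∑ j : V, m (Sum.inl i) (Sum.inl j)) = 2 * Csum := by
    rw [Finset.sum_congr rfl (fun i _ => hFC i), Finset.sum_comm]
    rw [Finset.sum_congr rfl (fun e _ => hCV e t0)]
    rw [Finset.sum_congr rfl (fun e _ => (hE4 e t0).symm)]
    rw [← Finset.mul_sum]
  have hP : (∑ v : V, ∑ p : G.edgeSet × Fin (n + 3 - 2), m (Sum.inl v) (Sum.inr p))
      = (n + 1) * (2 * Csum) := by
    rw [Finset.sum_comm]
    rw [Fintype.sum_prod_type]
    have h1 : ∀ e : G.edgeSet,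
        (∑ t : Fin (n + 3 - 2), ∑ v : V, m (Sum.inl v) (Sum.inr (e, t)))
          = (n + 1) * (2 * cst e t0) := by
      intro e
      rw [Finset.sum_congr rfl (fun t _ => by
        rw [hCV e t, ← hE4 e t0])]
      rw [Finset.sum_const, Finset.card_univ, Fintype.card_fin, smul_eq_mul, hsub2]
    rw [Finset.sum_congr rfl (fun e _ => h1 e)]
    rw [← Finset.mul_sum, ← Finset.mul_sum]
  have hQ : (∑ p : G.edgeSet × Fin (n + 3 - 2), ∑ y, m (Sum.inr p) y)
      = (n + 1) * ((n + 2) * Csum) := by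
    rw [Fintype.sum_prod_type]
    have h1 : ∀ e : G.edgeSet,
        (∑ t : Fin (n + 3 - 2), ∑ y, m (Sum.inr (e, t)) y)
          = (n + 1) * ((n + 2) * cst e t0) := by
      intro e
      rw [Finset.sum_congr rfl (fun t _ => by rw [hR e t, hE3 e t t0])]
      rw [Finset.sum_const, Finset.card_univ, Fintype.card_fin, smul_eq_mul, hsub2]
    rw [Finset.sum_congr rfl (fun e _ => h1 e)]
    rw [← Finset.mul_sum, ← Finset.mul_sum]
  have hTot : (∑ x, ∑ y, m x y)
      = 2 * Csum + (n + 1) * (2 * Csum) + (n + 1) * ((n + 2) * Csum) := by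
    rw [Fintype.sum_sum_type]
    have hfirst : (∑ v : V, ∑ y, m (Sum.inl v) y)
        = 2 * Csum + (n + 1) * (2 * Csum) := by
      rw [Finset.sum_congr rfl (fun v _ => Fintype.sum_sum_type (fun y => m (Sum.inl v) y))]
      rw [Finset.sum_add_distrib, hS, hP]
    rw [hfirst, hQ]
  have goal1 : 2 * (∑ x, ∑ y, m x y)
      = (n + 3) * (n + 3 - 1) * (∑ i : V, ∑ j : V, m (Sum.inl i) (Sum.inl j)) := by
    rw [hTot, hS, hsub1]
    ring
  refine ⟨goal1, ?_⟩
  intro d hd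
  rw [hsub1] at hd
  have h2d : (n + 3) * (∑ i : V, ∑ j : V, m (Sum.inl i) (Sum.inl j)) = 2 * d := by
    have h' : (n + 2) * (2 * d)
        = (n + 2) * ((n + 3) * (∑ i : V, ∑ j : V, m (Sum.inl i) (Sum.inl j))) := by
      calc (n + 2) * (2 * d) = 2 * (d * (n + 2)) := by ring
        _ = (n + 3) * (n + 3 - 1) * (∑ i : V, ∑ j : V, m (Sum.inl i) (Sum.inl j)) := by
            rw [← hd]; exact goal1
        _ = (n + 2) * ((n + 3) * (∑ i : V, ∑ j : V, m (Sum.inl i) (Sum.inl j))) := by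
            rw [hsub1]; ring
    exact (Nat.eq_of_mul_eq_mul_left (by omega) h').symm
  refine ⟨h2d, ⟨_, h2d.symm⟩, ?_⟩
  intro hpos
  have hdC : d = (n + 3) * Csum := by
    have h1 : 2 * d = 2 * ((n + 3) * Csum) := by
      rw [← h2d, hS]; ring
    omega
  have hcge : ∀ e : G.edgeSet, 1 ≤ cst e t0 := by
    intro e
    have hp : 0 < aE e + bE e := hpos _ _ (hadj e)
    have h4 := hE4 e t0
    omega
  have hCge : G.edgeFinset.card ≤ Csum := by
    rw [SimpleGraph.edgeFinset_card]
    calc Fintype.card G.edgeSet = ∑ _e : G.edgeSet, 1 := by simp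
      _ ≤ Csum := Finset.sum_le_sum (fun e _ => hcge e)
  calc (n + 3) * G.edgeFinset.card ≤ (n + 3) * Csum := Nat.mul_le_mul_left _ hCge
    _ = d := hdC.symm
end

section
/- Let k ≥ 3 and let Ĝ = (V, E) be a finite simple graph with |V| = n and |E| = m ≥ 1, and with power-hypergraph vertex set W = V ∪ (E × {1,…,k−2}). Let m* : V × V → ℕ be Eulerian with m*(i,j) = 0 unless {i,j} ∈ E, and suppose that for every edge {i,j} ∈ E the number m*(i,j) + m*(j,i) is positive and even. Define the arc-multiplicity function m on W by: m(i,j) = m*(i,j) for i, j ∈ V; m(i,(e,t)) = m*(i,j) whenever e = {i,j} ∈ E and t ∈ {1,…,k−2}; m((e,t),x) = (m*(i,j)+m*(j,i))/2 for e = {i,j} ∈ E, t ∈ {1,…,k−2} and every x ∈ e^{(k)} with x ≠ (e,t); and m = 0 on all other pairs. Let L_D and L_{D*} be the out-degree Laplacians of m and m*, and fix a vertex v₀ ∈ V; let L̂_D and L̂_{D*} denote these Laplacians with the row and column of v₀ deleted. Then det(L̂_D) = 2^{m−n+1} · k^{m(k−3)+n−1} · (Π_{{i,j}∈E} ((m*(i,j)+m*(j,i))/2)^{k−2})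 · det(L̂_{D*}). -/
open Matrix SimpleGraph Finset

/-- Half of the total multiplicity `(m*(i,j) + m*(j,i))/2` carried by an unordered pair. -/
def halfSum {V : Type*} (mstar : V → V → ℕ) : Sym2 V → ℕ :=
  Sym2.lift ⟨fun i j => (mstar i j + mstar j i) / 2, fun i j => by simp [add_comm]⟩

/-- The arc-multiplicity function of the lifted multi-digraph `D` on the vertex set
`W = V ⊕ (E × Fin (k-2))` of the `k`-power hypergraph, obtained from a multi-digraph
`D*` on `V` with arc-multiplicity function `mstar`: arcs among original vertices are kept;
each original vertex sends `m*(i,j)` arcs to every core vertex of the hyperedge of `{i,j}`;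
each core vertex of the hyperedge of `{i,j}` sends `(m*(i,j)+m*(j,i))/2` arcs to every other
vertex of that hyperedge. -/
noncomputable def liftedMult {V : Type*} [DecidableEq V] (G : SimpleGraph V) (k : ℕ)
    (mstar : V → V → ℕ) :
    (V ⊕ (G.edgeSet × Fin (k - 2))) → (V ⊕ (G.edgeSet × Fin (k - 2))) → ℕ
  | Sum.inl i, Sum.inl j => mstar i j
  | Sum.inl i, Sum.inr (e, _) =>
      if h : i ∈ (e : Sym2 V) then mstar i (Sym2.Mem.other h) else 0
  | Sum.inr (e, _), Sum.inl i =>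
      if i ∈ (e : Sym2 V) then halfSum mstar (e : Sym2 V) else 0
  | Sum.inr (e, t), Sum.inr (e', t') =>
      if e = e' ∧ t ≠ t' then halfSum mstar (e : Sym2 V) else 0

/-- The out-degree Laplacian of a multi-digraph given by an arc-multiplicity function. -/
def lap {S : Type*} [Fintype S] [DecidableEq S] (m : S → S → ℕ) : Matrix S S ℝ :=
  Matrix.of fun x y => if x = y then (∑ z, (m x z : ℝ)) else -(m x y : ℝ)

open scoped Kronecker

/-!
Order the vertices of `D` as original vertices first, core vertices second. On the `k - 2` core
vertices of an edge `e` the Laplacian of `D` is `h_e • (k • 1 - J)`, with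
`h_e = (m*(i,j) + m*(j,i)) / 2` and `J` the all-ones matrix; so the core block is
`diagonal h ⊗ₖ (k • 1 - J)`, of determinant `∏ h_e ^ (k - 2) * (2 * k ^ (k - 3)) ^ m`.
Adding to the column of each original vertex `j` half of every core column of the edges at `j`
clears the core-to-vertex block, since the rows of `k • 1 - J` sum to `2`, and, because `m*` is
carried by the edges, turns the vertex block into `(k / 2) • L_{D*}`. The reduced determinant is
therefore `(k / 2) ^ (n - 1) * det L̂_{D*}` times the determinant of the core block.
-/

theorem Matrix.det_smul_one_sub_ones {ι R : Type*} [Fintype ι] [DecidableEq ι] [Nonempty ι]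
    [Field R] {a : R} (ha : a ≠ 0) :
    det (a • 1 - of fun _ _ : ι => (1 : R)) =
      a ^ (Fintype.card ι - 1) * (a - Fintype.card ι) := by
  have h : a • 1 - of (fun _ _ : ι => (1 : R)) =
      a • (1 + replicateCol Unit (fun _ : ι => -a⁻¹) *
        replicateRow Unit (fun _ : ι => (1 : R))) := by
    ext i j
    simp [Matrix.mul_apply, mul_add, mul_inv_cancel₀ ha, sub_eq_add_neg]
  rw [h, det_smul, det_one_add_replicateCol_mul_replicateRow]
  obtain ⟨n, hn⟩ := Nat.exists_eq_add_one.mpr (Fintype.card_pos (α := ι))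
  simp only [dotProduct, mul_neg, sum_const, card_univ, nsmul_eq_mul, hn, Nat.add_sub_cancel]
  field_simp
  ring

theorem Matrix.det_fromBlocks_of_add_mul_eq_zero {m n R : Type*} [Fintype m] [Fintype n]
    [DecidableEq m] [DecidableEq n] [CommRing R] {A : Matrix m m R} {B : Matrix m n R}
    {C : Matrix n m R} {D : Matrix n n R} (X : Matrix n m R) (h : C + D * X = 0) :
    det (fromBlocks A B C D) = det (A + B * X) * det D := by
  have hX : det (fromBlocks 1 0 X 1 : Matrix (m ⊕ n) (m ⊕ n) R) = 1 := by simp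
  calc det (fromBlocks A B C D) = det (fromBlocks A B C D * fromBlocks 1 0 X 1) := by
        rw [det_mul, hX, mul_one]
    _ = det (A + B * X) * det D := by
        simp only [fromBlocks_multiply, Matrix.mul_one, Matrix.mul_zero, zero_add, h]
        simp [det_fromBlocks_zero₂₁]

namespace SimpleGraph

variable {V M : Type*} [Fintype V] [DecidableEq V] [AddCommMonoid M] (G : SimpleGraph V)
  [DecidableRel G.Adj]

theorem incidenceFinset_eq_image (x : V) :
    G.incidenceFinset x = (G.neighborFinset x).image (s(x, ·)) := by
  ext e
  simp only [mem_incidenceFinset, incidenceSet, Set.mem_ofPred_eq, mem_image, mem_neighborFinset]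
  constructor
  · rintro ⟨he, hx⟩
    refine ⟨Sym2.Mem.other hx, ?_, Sym2.other_spec hx⟩
    rwa [← G.mem_edgeSet, Sym2.other_spec hx]
  · rintro ⟨j, hj, rfl⟩
    exact ⟨hj, Sym2.mem_mk_left x j⟩

theorem sum_edgeSet_dite_mem (x : V) (f : V → M) :
    ∑ e : G.edgeSet, (if h : x ∈ (e : Sym2 V) then f (Sym2.Mem.other h) else 0) =
      ∑ j ∈ G.neighborFinset x, f j := by
  set F : Sym2 V → M := fun e => if h : x ∈ e then f (Sym2.Mem.other h) else 0
  have hF : ∀ j, F s(x, j) = f j := fun j => by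
    simp only [F, dif_pos (Sym2.mem_mk_left x j), Sym2.congr_right.mp (Sym2.other_spec _)]
  calc ∑ e : G.edgeSet, F e = ∑ e ∈ G.edgeFinset, F e :=
        (sum_subtype _ (fun _ => G.mem_edgeFinset) F).symm
    _ = ∑ e ∈ G.incidenceFinset x, F e := by
        refine (sum_subset (G.incidenceFinset_subset x) fun e he hx => dif_neg ?_).symm
        rw [incidenceFinset_eq_filter, mem_filter] at hx
        exact fun h => hx ⟨he, h⟩
    _ = ∑ j ∈ G.neighborFinset x, f j := by
        rw [incidenceFinset_eq_image, sum_image fun _ _ _ _ => Sym2.congr_right.mp]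
        exact sum_congr rfl fun j _ => hF j

theorem sum_edgeSet_dite_mem_eq_sum (x : V) {f : V → M} (hf : ∀ j, ¬ G.Adj x j → f j = 0) :
    ∑ e : G.edgeSet, (if h : x ∈ (e : Sym2 V) then f (Sym2.Mem.other h) else 0) =
      ∑ j, f j := by
  rw [sum_edgeSet_dite_mem]
  exact sum_subset (subset_univ _) fun j _ hj => hf j (by simpa using hj)

theorem sum_edgeSet_ite_mem_dite_mem (x y : V) {f : V → M}
    (hf : ∀ j, ¬ G.Adj x j → f j = 0) :
    ∑ e : G.edgeSet, (if y ∈ (e : Sym2 V) then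
      (if h : x ∈ (e : Sym2 V) then f (Sym2.Mem.other h) else 0) else 0) =
      (if x = y then ∑ j, f j else 0) + f y := by
  rcases eq_or_ne x y with rfl | hxy
  · rw [if_pos rfl, hf x (G.irrefl), add_zero, ← G.sum_edgeSet_dite_mem_eq_sum x hf]
    refine sum_congr rfl fun e _ => ?_
    split_ifs <;> rfl
  · have hterm : ∀ e : G.edgeSet, (if y ∈ (e : Sym2 V) then
        (if h : x ∈ (e : Sym2 V) then f (Sym2.Mem.other h) else 0) else 0) =
        if h : x ∈ (e : Sym2 V) then (fun j => if y = j then f j else 0) (Sym2.Mem.other h)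
          else 0 := fun e => by
      by_cases hx : x ∈ (e : Sym2 V)
      · have hy : y ∈ (e : Sym2 V) ↔ y = Sym2.Mem.other hx := by
          refine ⟨fun hy => ?_, fun hy => hy ▸ Sym2.other_mem hx⟩
          rw [← Sym2.congr_right, Sym2.other_spec hx, (Sym2.mem_and_mem_iff hxy).mp ⟨hx, hy⟩]
        simp only [dif_pos hx, hy]
      · simp [hx]
    rw [sum_congr rfl fun e _ => hterm e,
      G.sum_edgeSet_dite_mem x fun j => if y = j then f j else 0, sum_ite_eq, if_neg hxy, zero_add]
    split_ifs with hy
    · rfl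
    · exact (hf y (by simpa using hy)).symm

end SimpleGraph

theorem lap_apply_of_ne {S : Type*} [Fintype S] [DecidableEq S] (m : S → S → ℕ) {x y : S}
    (h : x ≠ y) : lap m x y = -m x y := by
  simp [lap, h]

theorem lap_apply_of_self_eq_zero {S : Type*} [Fintype S] [DecidableEq S] {m : S → S → ℕ}
    {x : S} (hx : m x x = 0) (y : S) :
    lap m x y = (if x = y then ∑ z, (m x z : ℝ) else 0) - m x y := by
  by_cases h : x = y
  · subst h
    simp [lap, hx]
  · simp [lap, h]

theorem Matrix.det_submatrix_ne_inl_of_add_mul_eq_zero {α β R : Type*} [Fintype α] [Fintype β]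
    [DecidableEq α] [DecidableEq β] [CommRing R] (M : Matrix (α ⊕ β) (α ⊕ β) R) (a : α)
    (X : Matrix β α R) (h : M.toBlocks₂₁ + M.toBlocks₂₂ * X = 0) :
    det (M.submatrix (fun x : {x // x ≠ Sum.inl a} => x.val) fun x => x.val) =
      det ((M.toBlocks₁₁ + M.toBlocks₁₂ * X).submatrix (fun i : {i // i ≠ a} => i.val)
        fun i => i.val) * det M.toBlocks₂₂ := by
  let e : {i // i ≠ a} ⊕ β ≃ {x // x ≠ Sum.inl a} :=
    (Equiv.subtypeSum (p := (· ≠ Sum.inl a)) |>.trans (Equiv.sumCongr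
      (Equiv.subtypeEquivRight fun _ => Sum.inl_injective.ne_iff)
      (Equiv.subtypeUnivEquiv fun _ => Sum.inr_ne_inl))).symm
  have hblocks :
      (M.submatrix (fun x : {x // x ≠ Sum.inl a} => x.val) fun x => x.val).submatrix e e =
      fromBlocks (M.toBlocks₁₁.submatrix Subtype.val Subtype.val)
        (M.toBlocks₁₂.submatrix Subtype.val id) (M.toBlocks₂₁.submatrix id Subtype.val)
        M.toBlocks₂₂ := by
    ext (i | p) (j | q) <;> rfl
  rw [← det_submatrix_equiv_self e, hblocks]
  exact det_fromBlocks_of_add_mul_eq_zero (X.submatrix id Subtype.val)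
    (funext₂ fun p j => congrFun₂ h p j.val)

noncomputable def halfIncidence {V : Type*} [DecidableEq V] (G : SimpleGraph V) (k : ℕ) :
    Matrix (G.edgeSet × Fin (k - 2)) V ℝ :=
  of fun p j => if j ∈ (p.1 : Sym2 V) then 1 / 2 else 0

theorem halfIncidence_apply {V : Type*} [DecidableEq V] (G : SimpleGraph V) (k : ℕ)
    (e : G.edgeSet) (t : Fin (k - 2)) (j : V) :
    halfIncidence G k (e, t) j = if j ∈ (e : Sym2 V) then 1 / 2 else 0 := rfl

section LiftedMultidigraph

variable {V : Type*} [DecidableEq V] {G : SimpleGraph V} {k : ℕ} {mstar : V → V → ℕ}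

theorem liftedMult_inl_inr (i : V) (e : G.edgeSet) (t : Fin (k - 2)) :
    (liftedMult G k mstar (.inl i) (.inr (e, t)) : ℝ) =
      if h : i ∈ (e : Sym2 V) then (mstar i (Sym2.Mem.other h) : ℝ) else 0 := by
  simp only [liftedMult]
  split_ifs <;> simp

theorem liftedMult_inr_inl (e : G.edgeSet) (t : Fin (k - 2)) (j : V) :
    (liftedMult G k mstar (.inr (e, t)) (.inl j) : ℝ) =
      if j ∈ (e : Sym2 V) then (halfSum mstar e : ℝ) else 0 := by
  simp only [liftedMult]
  split_ifs <;> simp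

theorem liftedMult_inr_inr (e e' : G.edgeSet) (t t' : Fin (k - 2)) :
    (liftedMult G k mstar (.inr (e, t)) (.inr (e', t')) : ℝ) =
      if e = e' ∧ t ≠ t' then (halfSum mstar e : ℝ) else 0 := by
  simp only [liftedMult]
  split_ifs <;> simp

variable [Fintype V] [DecidableRel G.Adj]

theorem sum_liftedMult_inl (hk : 2 ≤ k) (hsupp : ∀ i j, ¬ G.Adj i j → mstar i j = 0)
    (i : V) :
    ∑ z, (liftedMult G k mstar (.inl i) z : ℝ) =
      ((k : ℝ) - 1) * ∑ j, (mstar i j : ℝ) := by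
  have hcore : ∑ e : G.edgeSet, (if h : i ∈ (e : Sym2 V) then (mstar i (Sym2.Mem.other h) : ℝ)
      else 0) = ∑ j, (mstar i j : ℝ) :=
    G.sum_edgeSet_dite_mem_eq_sum i (f := fun j => (mstar i j : ℝ)) fun j hj => by
      simp [hsupp i j hj]
  simp only [Fintype.sum_sum_type, Fintype.sum_prod_type, liftedMult_inl_inr, sum_const,
    card_univ, Fintype.card_fin, nsmul_eq_mul, ← mul_sum, hcore, Nat.cast_sub hk]
  simp only [liftedMult]
  ring

theorem sum_liftedMult_inr (e : G.edgeSet) (t : Fin (k - 2)) :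
    ∑ z, (liftedMult G k mstar (.inr (e, t)) z : ℝ) = ((k : ℝ) - 1) * halfSum mstar e := by
  have hk : 3 ≤ k := by have := t.isLt; omega
  have hV : ∑ j : V, (if j ∈ (e : Sym2 V) then (halfSum mstar e : ℝ) else 0) =
      2 * halfSum mstar e := by
    have : ({j | j ∈ (e : Sym2 V)} : Finset V) = (e : Sym2 V).toFinset := by ext; simp
    rw [← sum_filter, sum_const, nsmul_eq_mul, this,
      Sym2.card_toFinset_of_not_isDiag _ (G.not_isDiag_of_mem_edgeSet e.2), Nat.cast_ofNat]
  have hcore : ∑ t' : Fin (k - 2), (if t ≠ t' then (halfSum mstar e : ℝ) else 0) =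
      ((k : ℝ) - 3) * halfSum mstar e := by
    rw [← sum_filter, sum_const, nsmul_eq_mul, filter_ne, card_erase_of_mem (mem_univ t),
      card_univ, Fintype.card_fin, Nat.cast_sub (by omega), Nat.cast_sub (by omega)]
    ring
  simp only [Fintype.sum_sum_type, Fintype.sum_prod_type, liftedMult_inr_inl, liftedMult_inr_inr,
    ite_and, sum_ite_irrel, sum_const_zero, hcore, sum_ite_eq, mem_univ, if_true, hV]
  ring

theorem lap_liftedMult_toBlocks₂₂ :
    (lap (liftedMult G k mstar)).toBlocks₂₂ =
      diagonal (fun e : G.edgeSet => (halfSum mstar e : ℝ)) ⊗ₖ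
        ((k : ℝ) • (1 : Matrix (Fin (k - 2)) (Fin (k - 2)) ℝ) - of fun _ _ => 1) := by
  ext ⟨e, t⟩ ⟨e', t'⟩
  rw [toBlocks₂₂, of_apply, lap_apply_of_self_eq_zero (by simp [liftedMult]),
    sum_liftedMult_inr, liftedMult_inr_inr]
  simp only [kroneckerMap_apply, diagonal_apply, Matrix.sub_apply, Matrix.smul_apply, one_apply,
    of_apply, Sum.inr.injEq, Prod.ext_iff, smul_eq_mul]
  rcases eq_or_ne e e' with rfl | he
  · rcases eq_or_ne t t' with rfl | ht
    · simp only [and_self, if_true, ne_eq, not_true_eq_false, and_false, if_false]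
      ring
    · simp [ht]
  · simp [he]

theorem lap_liftedMult_toBlocks₂₁_add_mul_halfIncidence :
    (lap (liftedMult G k mstar)).toBlocks₂₁ +
      (lap (liftedMult G k mstar)).toBlocks₂₂ * halfIncidence G k = 0 := by
  rw [lap_liftedMult_toBlocks₂₂]
  ext ⟨e, t⟩ j
  have hk : 3 ≤ k := by have := t.isLt; omega
  simp only [Matrix.add_apply, mul_apply, Fintype.sum_prod_type, kroneckerMap_apply,
    diagonal_apply, toBlocks₂₁, of_apply, lap_apply_of_ne _ Sum.inr_ne_inl, liftedMult_inr_inl,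
    halfIncidence, ite_mul, zero_mul, sum_ite_irrel, sum_const_zero, sum_ite_eq, mem_univ, if_true,
    Matrix.sub_apply, Matrix.smul_apply, one_apply, smul_eq_mul, Matrix.zero_apply]
  have hrow : ∑ t' : Fin (k - 2), ((k : ℝ) * (if t = t' then 1 else 0) - 1) = 2 := by
    simp [sum_sub_distrib, Nat.cast_sub (by omega : 2 ≤ k)]
  by_cases hj : j ∈ (e : Sym2 V)
  · simp only [hj, if_true, ← sum_mul, ← mul_sum, hrow]
    ring
  · simp [hj]

theorem lap_liftedMult_toBlocks₁₁_add_mul_halfIncidence (hk : 2 ≤ k)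
    (hsupp : ∀ i j, ¬ G.Adj i j → mstar i j = 0) :
    (lap (liftedMult G k mstar)).toBlocks₁₁ +
      (lap (liftedMult G k mstar)).toBlocks₁₂ * halfIncidence G k =
        ((k : ℝ) / 2) • lap mstar := by
  ext x y
  have hxx : mstar x x = 0 := hsupp x x (G.irrefl)
  have hpair : ∑ e : G.edgeSet, (if h : x ∈ (e : Sym2 V) then (mstar x (Sym2.Mem.other h) : ℝ)
      else 0) * (if y ∈ (e : Sym2 V) then 1 / 2 else 0) =
      ((if x = y then ∑ j, (mstar x j : ℝ) else 0) + mstar x y) / 2 := by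
    rw [← G.sum_edgeSet_ite_mem_dite_mem x y (f := fun j => (mstar x j : ℝ))
      fun j hj => by simp [hsupp x j hj], sum_div]
    refine sum_congr rfl fun e _ => ?_
    split_ifs <;> ring
  simp only [Matrix.add_apply, mul_apply, Fintype.sum_prod_type, toBlocks₁₁, toBlocks₁₂,
    of_apply, lap_apply_of_ne _ Sum.inl_ne_inr, liftedMult_inl_inr, halfIncidence_apply,
    Matrix.smul_apply, smul_eq_mul, neg_mul, sum_neg_distrib, sum_const, card_univ,
    Fintype.card_fin, nsmul_eq_mul, ← mul_sum, hpair]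
  rw [lap_apply_of_self_eq_zero (m := liftedMult G k mstar) (x := .inl x) hxx,
    sum_liftedMult_inl hk hsupp, lap_apply_of_self_eq_zero hxx, Nat.cast_sub hk]
  simp only [Sum.inl.injEq, liftedMult]
  split_ifs <;> push_cast <;> ring

theorem det_lap_liftedMult_toBlocks₂₂ (hk : 3 ≤ k) :
    det (lap (liftedMult G k mstar)).toBlocks₂₂ =
      (∏ e ∈ G.edgeFinset, ((halfSum mstar e : ℕ) : ℝ) ^ (k - 2)) *
        ((k : ℝ) ^ (k - 3) * 2) ^ #G.edgeFinset := by
  have : Nonempty (Fin (k - 2)) := ⟨⟨0, by omega⟩⟩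
  rw [lap_liftedMult_toBlocks₂₂, det_kronecker, det_diagonal,
    det_smul_one_sub_ones (Nat.cast_ne_zero.mpr (by omega)), Fintype.card_fin, card_edgeSet,
    ← prod_pow, prod_set_coe (f := fun e => ((halfSum mstar e : ℕ) : ℝ) ^ (k - 2)),
    ← edgeFinset, show k - 2 - 1 = k - 3 by omega, Nat.cast_sub (by omega), sub_sub_cancel,
    Nat.cast_ofNat]

end LiftedMultidigraph

theorem det_reduced_laplacian_of_lifted_multidigraph_general
    {V : Type*} [Fintype V] [DecidableEq V] (G : SimpleGraph V) [DecidableRel G.Adj]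
    (k : ℕ) (hk : 3 ≤ k)
    (mstar : V → V → ℕ)
    (hsupp : ∀ i j, ¬ G.Adj i j → mstar i j = 0)
    (v₀ : V) :
    Matrix.det ((lap (liftedMult G k mstar)).submatrix
        (fun x : {x : V ⊕ (G.edgeSet × Fin (k - 2)) // x ≠ Sum.inl v₀} => x.val)
        (fun x => x.val)) =
      (2 : ℝ) ^ ((G.edgeFinset.card : ℤ) - (Fintype.card V : ℤ) + 1) *
      (k : ℝ) ^ (G.edgeFinset.card * (k - 3) + Fintype.card V - 1) *
      (∏ e ∈ G.edgeFinset, ((halfSum mstar e : ℕ) : ℝ) ^ (k - 2)) *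
      Matrix.det ((lap mstar).submatrix
        (fun i : {i : V // i ≠ v₀} => i.val) (fun i => i.val)) := by
  have hcard : Fintype.card {i // i ≠ v₀} = Fintype.card V - 1 := by simp
  obtain ⟨n, hn⟩ := Nat.exists_eq_add_one.mpr (Fintype.card_pos_iff.mpr ⟨v₀⟩)
  set m := #G.edgeFinset
  calc _ = det (((k : ℝ) / 2) • (lap mstar).submatrix (fun i : {i // i ≠ v₀} => i.val)
          fun i => i.val) * det (lap (liftedMult G k mstar)).toBlocks₂₂ := by
        rw [det_submatrix_ne_inl_of_add_mul_eq_zero _ v₀ _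
          lap_liftedMult_toBlocks₂₁_add_mul_halfIncidence,
          lap_liftedMult_toBlocks₁₁_add_mul_halfIncidence (by omega) hsupp]
        rfl
    _ = ((k : ℝ) / 2) ^ n * det ((lap mstar).submatrix (fun i : {i // i ≠ v₀} => i.val)
          fun i => i.val) * ((∏ e ∈ G.edgeFinset, ((halfSum mstar e : ℕ) : ℝ) ^ (k - 2)) *
            ((k : ℝ) ^ (k - 3) * 2) ^ m) := by
        rw [det_smul, hcard, hn, Nat.add_sub_cancel, det_lap_liftedMult_toBlocks₂₂ hk]
    _ = _ := by
        rw [hn, Nat.add_sub_assoc (by omega), Nat.add_sub_cancel, pow_add, pow_mul]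
        push_cast
        rw [show (m : ℤ) - (n + 1) + 1 = m - n by ring, zpow_sub₀ two_ne_zero, zpow_natCast,
          zpow_natCast, div_pow]
        field_simp
        ring

theorem det_reduced_laplacian_of_lifted_multidigraph
    {V : Type*} [Fintype V] [DecidableEq V] (G : SimpleGraph V) [DecidableRel G.Adj]
    (k : ℕ) (hk : 3 ≤ k) (hm : 1 ≤ G.edgeFinset.card)
    (mstar : V → V → ℕ)
    (heuler : ∀ i, ∑ j, mstar i j = ∑ j, mstar j i)
    (hsupp : ∀ i j, ¬ G.Adj i j → mstar i j = 0)
    (hpos : ∀ i j, G.Adj i j → 0 < mstar i j + mstar j i)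
    (heven : ∀ i j, G.Adj i j → Even (mstar i j + mstar j i))
    (v₀ : V) :
    Matrix.det ((lap (liftedMult G k mstar)).submatrix
        (fun x : {x : V ⊕ (G.edgeSet × Fin (k - 2)) // x ≠ Sum.inl v₀} => x.val)
        (fun x => x.val)) =
      (2 : ℝ) ^ ((G.edgeFinset.card : ℤ) - (Fintype.card V : ℤ) + 1) *
      (k : ℝ) ^ (G.edgeFinset.card * (k - 3) + Fintype.card V - 1) *
      (∏ e ∈ G.edgeFinset, ((halfSum mstar e : ℕ) : ℝ) ^ (k - 2)) *
      Matrix.det ((lap mstar).submatrix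
        (fun i : {i : V // i ≠ v₀} => i.val) (fun i => i.val)) :=
  det_reduced_laplacian_of_lifted_multidigraph_general G k hk mstar hsupp v₀
end

section
/- Let n ≥ 3, let A be the adjacency matrix of the cycle C_n, and let A_− be the signed adjacency matrix of C_n in which exactly one edge has sign −1 and all other edges have sign +1. Then det(X·I − A) · det(X·I − A_−) = φ(X² − 2), where φ(Y) = det(Y·I − A) is the characteristic polynomial of A and φ(X² − 2) denotes its composition with the polynomial X² − 2. Equivalently, the square of the pseudo-characteristic function of C_n is φ(λ² − 2). -/
/-!
Both matrices are `S + Sᵀ` for the signed cyclic shift `S` (entries `1` at `(i, i + 1)`, except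
`ε = ±1` at `(0, 1)`), which is orthogonal with `det (t • 1 - S) = tⁿ - ε`. If `r * r' = 1`, then
`((r + r') • 1 - (S + Sᵀ)) * (-S) = (r • 1 - S) * (r' • 1 - S)`, so the characteristic polynomial
of `S + Sᵀ` takes the value `rⁿ + r'ⁿ - 2ε` at `r + r'`. Adjoining to `R[X]` a root `r` of
`Y² - XY + 1` makes `X = r + r⁻¹`, whence `charpoly (S + Sᵀ) = Dₙ - 2ε` for the Dickson polynomial
`Dₙ(r + r⁻¹) = rⁿ + r⁻ⁿ`. Finally `(Dₙ - 2)(Dₙ + 2) = Dₙ² - 4 = D₂ₙ - 2 = (Dₙ - 2) ∘ (X² - 2)`.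
-/

open Matrix SimpleGraph Polynomial

/-- The signed adjacency matrix of the cycle `C_n` (here `n = m + 3 ≥ 3`) in which exactly
one edge (the edge `{0, 1}`) has sign `−1` and all other edges have sign `+1`. -/
noncomputable def negCycleAdj (m : ℕ) : Matrix (Fin (m + 3)) (Fin (m + 3)) ℝ :=
  Matrix.of fun u v =>
    if (u = 0 ∧ v = 1) ∨ (u = 1 ∧ v = 0) then (-1 : ℝ)
    else (cycleGraph (m + 3)).adjMatrix ℝ u v

theorem Fin.succ_ne_succ_add_one {n : ℕ} {i j : Fin (n + 1)} (h : j ≤ i) :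
    j.succ ≠ i.succ + 1 := by
  rw [Fin.le_def] at h
  rw [Ne, Fin.ext_iff, Fin.val_add_one]
  split_ifs <;> simp; omega

namespace Matrix

variable {R : Type*} [CommRing R]

def cyclicBidiagonal {n : ℕ} [NeZero n] (d u : Fin n → R) : Matrix (Fin n) (Fin n) R :=
  of fun i j => if j = i then d i else if j = i + 1 then u i else 0

section cyclicBidiagonal

variable {n : ℕ} (d u : Fin (n + 2) → R)

theorem det_cyclicBidiagonal_submatrix_succ_succ :
    ((cyclicBidiagonal d u).submatrix Fin.succ Fin.succ).det = ∏ i : Fin (n + 1), d i.succ := by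
  rw [det_of_isUpperTriangular]
  · simp [cyclicBidiagonal]
  · intro i j (hji : j < i)
    simp [cyclicBidiagonal, hji.ne, Fin.succ_ne_succ_add_one hji.le]

theorem det_cyclicBidiagonal_submatrix_castSucc_succ :
    ((cyclicBidiagonal d u).submatrix Fin.castSucc Fin.succ).det =
      ∏ i : Fin (n + 1), u i.castSucc := by
  rw [det_of_isLowerTriangular]
  · simp [cyclicBidiagonal, Fin.coeSucc_eq_succ, Fin.ext_iff]
  · intro i j (hij : i < j)
    have h₁ : (j : ℕ) + 1 ≠ i := by grind [Fin.lt_def]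
    have h₂ : (j : ℕ) ≠ i := by grind [Fin.lt_def]
    simp [cyclicBidiagonal, Fin.coeSucc_eq_succ, Fin.ext_iff, h₁, h₂]

theorem det_cyclicBidiagonal :
    (cyclicBidiagonal d u).det = ∏ i, d i + (-1) ^ (n + 1) * ∏ i, u i := by
  have entry_zero : cyclicBidiagonal d u 0 0 = d 0 := by simp [cyclicBidiagonal]
  have entry_last : cyclicBidiagonal d u (Fin.last _) 0 = u (Fin.last _) := by
    simp [cyclicBidiagonal, Fin.ext_iff]
  have entry_middle (i : Fin n) : cyclicBidiagonal d u i.castSucc.succ 0 = 0 := by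
    have : i.castSucc.succ + 1 ≠ 0 := by
      rw [Fin.succ_castSucc, Fin.coeSucc_eq_succ]
      exact Fin.succ_ne_zero _
    simp [cyclicBidiagonal, (Fin.succ_ne_zero _).symm, this.symm]
  rw [det_succ_column_zero, Fin.sum_univ_succ, Fin.sum_univ_castSucc]
  simp only [entry_zero, entry_last, entry_middle, Fin.succAbove_zero, Fin.succ_last,
    Fin.succAbove_last, det_cyclicBidiagonal_submatrix_succ_succ,
    det_cyclicBidiagonal_submatrix_castSucc_succ, mul_zero, zero_mul, Finset.sum_const_zero,
    Fin.val_zero, Fin.val_last, Nat.succ_eq_add_one, pow_zero, Fin.prod_univ_succ d,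
    Fin.prod_univ_castSucc u]
  ring

theorem smul_one_sub_cyclicBidiagonal (t : R) :
    t • 1 - cyclicBidiagonal d u = cyclicBidiagonal (fun i => t - d i) (-u) := by
  ext i j
  by_cases hij : j = i
  · subst hij
    simp [cyclicBidiagonal]
  · by_cases hj : j = i + 1 <;> simp [cyclicBidiagonal, hij, Ne.symm hij, hj]

end cyclicBidiagonal

def signedCycleShift (n : ℕ) [NeZero n] (ε : R) : Matrix (Fin n) (Fin n) R :=
  cyclicBidiagonal 0 fun i => if i = 0 then ε else 1

def signedCycleAdj (n : ℕ) [NeZero n] (ε : R) : Matrix (Fin n) (Fin n) R :=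
  signedCycleShift n ε + (signedCycleShift n ε)ᵀ

section signedCycle

variable {n : ℕ} (ε : R)

theorem signedCycleShift_apply (i j : Fin (n + 2)) :
    signedCycleShift (n + 2) ε i j = if j = i + 1 then (if i = 0 then ε else 1) else 0 := by
  have : i + 1 ≠ i := by simp
  simp only [signedCycleShift, cyclicBidiagonal, of_apply, Pi.zero_apply]
  split_ifs <;> simp_all

theorem det_smul_one_sub_signedCycleShift (t : R) :
    (t • 1 - signedCycleShift (n + 2) ε).det = t ^ (n + 2) - ε := by
  have prod_sign : ∏ i : Fin (n + 2), -(if i = 0 then ε else 1) = (-1) ^ (n + 2) * ε := by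
    simp [Finset.prod_neg, Finset.prod_ite_eq']
  rw [signedCycleShift, smul_one_sub_cyclicBidiagonal, det_cyclicBidiagonal]
  simp only [Pi.zero_apply, sub_zero, Finset.prod_const, Finset.card_univ, Fintype.card_fin,
    Pi.neg_apply, prod_sign]
  have odd_sign : (-1 : R) ^ (n + 1) * (-1) ^ (n + 2) = -1 := by
    rw [← pow_add]
    exact Odd.neg_one_pow ⟨n + 1, by ring⟩
  linear_combination ε * odd_sign

theorem signedCycleShift_mul_transpose (hε : ε * ε = 1) :
    signedCycleShift (n + 2) ε * (signedCycleShift (n + 2) ε)ᵀ = 1 := by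
  ext i j
  rw [mul_apply, Finset.sum_eq_single (i + 1)]
  · by_cases hij : i = j
    · subst hij
      by_cases hi : i = 0 <;> simp [signedCycleShift_apply, hi, hε]
    · simp [signedCycleShift_apply, hij]
  · intro k _ hk
    simp [signedCycleShift_apply, hk]
  · simp

theorem det_smul_one_sub_signedCycleAdj {r r' : R} (hr : r * r' = 1) (hε : ε * ε = 1) :
    ((r + r') • 1 - signedCycleAdj (n + 2) ε).det = r ^ (n + 2) + r' ^ (n + 2) - 2 * ε := by
  rw [signedCycleAdj]
  set S := signedCycleShift (n + 2) ε
  have hS : Sᵀ * S = 1 := mul_eq_one_comm.mp (signedCycleShift_mul_transpose ε hε)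
  have factor : ((r + r') • 1 - (S + Sᵀ)) * -S = (r • 1 - S) * (r' • 1 - S) := by
    simp only [mul_neg, sub_mul, mul_sub, add_mul, smul_mul_assoc, mul_smul_comm, one_mul,
      mul_one, hS, smul_sub, smul_smul, mul_comm r' r, hr, add_smul, one_smul]
    abel
  have det_neg_S : (-S).det = -ε := by
    simpa using det_smul_one_sub_signedCycleShift ε (0 : R)
  have hdet := congrArg det factor
  rw [det_mul, det_mul, det_neg_S, det_smul_one_sub_signedCycleShift,
    det_smul_one_sub_signedCycleShift] at hdet
  set D := ((r + r') • 1 - (S + Sᵀ)).det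
  have hrn : r ^ (n + 2) * r' ^ (n + 2) = 1 := by rw [← mul_pow, hr, one_pow]
  linear_combination (-ε) * hdet + (r ^ (n + 2) + r' ^ (n + 2) - D - ε) * hε - ε * hrn

theorem signedCycleAdj_map {S : Type*} [CommRing S] (f : R →+* S) :
    (signedCycleAdj (n + 2) ε).map f = signedCycleAdj (n + 2) (f ε) := by
  ext i j
  simp [signedCycleAdj, signedCycleShift_apply, apply_ite f]

theorem charpoly_signedCycleAdj [IsDomain R] (hε : ε * ε = 1) :
    (signedCycleAdj (n + 2) ε).charpoly = dickson 1 1 (n + 2) - C (2 * ε) := by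
  have hf : (X ^ 2 - C X * X + 1 : R[X][X]).degree = 2 := by compute_degree!
  set f : R[X][X] := X ^ 2 - C X * X + 1
  set r := AdjoinRoot.root f
  set r' := AdjoinRoot.of f X - r
  have hr : r * r' = 1 := by
    have h := AdjoinRoot.eval₂_root f
    simp only [f, eval₂_add, eval₂_sub, eval₂_mul, eval₂_pow, eval₂_C, eval₂_X, eval₂_one] at h
    linear_combination -h
  have of_eq_eval (p : R[X]) :
      AdjoinRoot.of f p = (p.map (algebraMap R (AdjoinRoot f))).eval (r + r') := by
    rw [eval_map_algebraMap, show r + r' = algebraMap R[X] (AdjoinRoot f) X by simp [r'],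
      aeval_algebraMap_apply, aeval_X_left_apply]
    rfl
  have hε' : algebraMap R (AdjoinRoot f) ε * algebraMap R (AdjoinRoot f) ε = 1 := by
    rw [← map_mul, hε, map_one]
  apply AdjoinRoot.of.injective_of_degree_ne_zero (f := f) (by rw [hf]; decide)
  rw [of_eq_eval, of_eq_eval, ← charpoly_map, eval_charpoly, signedCycleAdj_map, scalar_apply,
    ← smul_one_eq_diagonal, det_smul_one_sub_signedCycleAdj _ hr hε', Polynomial.map_sub,
    map_dickson, map_one, eval_sub, dickson_one_one_eval_add_inv r r' hr, Polynomial.map_C,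
    eval_C, map_mul, map_ofNat]

end signedCycle

theorem signedCycleAdj_apply_eq_ite (m : ℕ) (ε : R) (u v : Fin (m + 3)) :
    signedCycleAdj (m + 3) ε u v =
      if (u = 0 ∧ v = 1) ∨ (u = 1 ∧ v = 0) then ε else (cycleGraph (m + 3)).adjMatrix R u v := by
  have one_add_one_ne_zero : (1 + 1 : Fin (m + 3)) ≠ 0 := by
    simp [Fin.ext_iff, Fin.val_add, Nat.mod_eq_of_lt (show 2 < m + 3 by omega)]
  have add_one_add_one_ne_self : ∀ w : Fin (m + 3), w + 1 + 1 ≠ w := by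
    intro w h; rw [add_assoc] at h; exact one_add_one_ne_zero (add_eq_left.mp h)
  rw [signedCycleAdj, add_apply, transpose_apply, signedCycleShift_apply, signedCycleShift_apply,
    SimpleGraph.adjMatrix_apply]
  simp only [SimpleGraph.cycleGraph_adj, sub_eq_iff_eq_add']
  grind

end Matrix

theorem Polynomial.dickson_one_one_sq_sub_four {R : Type*} [CommRing R] (n : ℕ) :
    dickson 1 (1 : R) n ^ 2 - 4 = (dickson 1 1 n - 2).comp (X ^ 2 - 2) := by
  have hD₂ : (X ^ 2 - 2 : R[X]) = dickson 1 1 2 := by rw [dickson_two, map_one]; ring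
  calc dickson 1 (1 : R) n ^ 2 - 4 = (dickson 1 1 2).comp (dickson 1 1 n) - 2 := by
        rw [← hD₂, sub_comp, pow_comp, X_comp, ofNat_comp]; ring
    _ = (dickson 1 1 n).comp (dickson 1 1 2) - 2 := by
        rw [← dickson_one_one_mul, mul_comm, dickson_one_one_mul]
    _ = (dickson 1 1 n - 2).comp (X ^ 2 - 2) := by rw [hD₂, sub_comp, ofNat_comp]; norm_cast

theorem adjMatrix_cycleGraph_eq_signedCycleAdj {R : Type*} [CommRing R] (m : ℕ) :
    (cycleGraph (m + 3)).adjMatrix R = signedCycleAdj (m + 3) 1 := by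
  ext u v
  rw [signedCycleAdj_apply_eq_ite]
  split_ifs with h
  · rcases h with ⟨rfl, rfl⟩ | ⟨rfl, rfl⟩ <;> simp [cycleGraph_adj]
  · rfl

theorem negCycleAdj_eq_signedCycleAdj (m : ℕ) : negCycleAdj m = signedCycleAdj (m + 3) (-1) := by
  ext u v
  rw [signedCycleAdj_apply_eq_ite]
  rfl

theorem cycle_charpoly_prod_eq_comp (m : ℕ) :
    ((cycleGraph (m + 3)).adjMatrix ℝ).charpoly * (negCycleAdj m).charpoly =
      ((cycleGraph (m + 3)).adjMatrix ℝ).charpoly.comp (X ^ 2 - C 2) := by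
  rw [adjMatrix_cycleGraph_eq_signedCycleAdj, negCycleAdj_eq_signedCycleAdj,
    charpoly_signedCycleAdj (n := m + 1) _ (by norm_num),
    charpoly_signedCycleAdj (n := m + 1) _ (by norm_num)]
  simp only [mul_one, mul_neg, map_neg, C_ofNat, sub_neg_eq_add]
  rw [← dickson_one_one_sq_sub_four]
  ring
end
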